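/- arXiv:2602.13095 — 6 statements merged into one kernel-verified Lean document; each statement's English description precedes it below -/
import Mathlib

section
/- Let L_t be a time-dependent GKSL generator with Hermitian jump operators satisfying Condition Q, and let ρ* be a fixed (time-independent) density matrix. Then the following are equivalent: (1) there exists a density matrix ρ0 and a solution ρ_t with ρ_0 = ρ0 such that lim_{t→∞} ρ_t = ρ*; (2) ρ* ∈ C^Sch, i.e., [H_t, ρ*] = 0 and [L_{m,t}, ρ*] = 0 for all m and all t ≥ 0. -/
open Matrix Filter
open scoped ComplexOrder

attribute [local instance] Matrix.normedAddCommGroup Matrix.normedSpace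

noncomputable def hsNorm {d : ℕ} (A : Matrix (Fin d) (Fin d) ℂ) : ℝ :=
  Real.sqrt ((Matrix.trace (Aᴴ * A)).re)

noncomputable def opNorm2 {d : ℕ}
    (Φ : Matrix (Fin d) (Fin d) ℂ → Matrix (Fin d) (Fin d) ℂ) : ℝ :=
  sSup {r : ℝ | ∃ A, hsNorm A = 1 ∧ r = hsNorm (Φ A)}

noncomputable def gksl {d M : ℕ} (H : ℝ → Matrix (Fin d) (Fin d) ℂ)
    (L : Fin M → ℝ → Matrix (Fin d) (Fin d) ℂ) (t : ℝ)
    (ρ : Matrix (Fin d) (Fin d) ℂ) : Matrix (Fin d) (Fin d) ℂ :=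
  (-Complex.I) • (H t * ρ - ρ * H t) +
    ∑ m : Fin M, (L m t * ρ * L m t - (2⁻¹ : ℂ) • ((L m t) ^ 2 * ρ + ρ * (L m t) ^ 2))

def CondQ {d : ℕ}
    (ℒ : ℝ → Matrix (Fin d) (Fin d) ℂ → Matrix (Fin d) (Fin d) ℂ) : Prop :=
  (∀ t0 : ℝ, 0 ≤ t0 → ∀ ε > (0 : ℝ), ∃ δ > (0 : ℝ), ∀ t : ℝ, 0 ≤ t → |t - t0| < δ →
      opNorm2 (fun A => ℒ t A - ℒ t0 A) < ε) ∧
  (∃ M > (0 : ℝ), ∀ t : ℝ, 0 ≤ t → opNorm2 (ℒ t) ≤ M) ∧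
  (∀ ε > (0 : ℝ), ∀ δ > (0 : ℝ), ∀ t0 : ℝ, 0 ≤ t0 →
    ∃ ts : ℕ → ℝ, (∀ n, 0 ≤ ts n) ∧ (∀ n, ts n + δ < ts (n + 1)) ∧
      ∀ n, ∀ t ∈ Set.Icc (0 : ℝ) δ,
        opNorm2 (fun A => ℒ (ts n + t) A - ℒ (t0 + t) A) < ε)

def IsDensity {d : ℕ} (ρ : Matrix (Fin d) (Fin d) ℂ) : Prop :=
  ρ.PosSemidef ∧ Matrix.trace ρ = 1


noncomputable def hsNormSq {d : ℕ} (A : Matrix (Fin d) (Fin d) ℂ) : ℝ :=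
  (Matrix.trace (Aᴴ * A)).re

noncomputable def opNorm2' {d : ℕ}
    (Φ : Matrix (Fin d) (Fin d) ℂ → Matrix (Fin d) (Fin d) ℂ) : ℝ :=
  sSup {r : ℝ | ∃ A, hsNorm A = 1 ∧ Matrix.trace A = 0 ∧ r = hsNorm (Φ A)}

/-- The adjoint operation on a time-dependent family of matrices:
`ad(A)_t = i[H_t, A_t] + ∂_t A_t`. -/
noncomputable def adOp {d : ℕ} (H : ℝ → Matrix (Fin d) (Fin d) ℂ)
    (A : ℝ → Matrix (Fin d) (Fin d) ℂ) : ℝ → Matrix (Fin d) (Fin d) ℂ :=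
  fun t => Complex.I • (H t * A t - A t * H t) + deriv A t

/-- `n`-fold application of the adjoint operation to a family of matrices. -/
noncomputable def adPow {d : ℕ} (H : ℝ → Matrix (Fin d) (Fin d) ℂ) :
    ℕ → (ℝ → Matrix (Fin d) (Fin d) ℂ) → (ℝ → Matrix (Fin d) (Fin d) ℂ)
  | 0, A => A
  | n + 1, A => adOp H (adPow H n A)

/-! ### Auxiliary: identification with Euclidean space -/

noncomputable def eE {d : ℕ} :
    Matrix (Fin d) (Fin d) ℂ ≃ₗ[ℂ] EuclideanSpace ℂ (Fin d × Fin d) where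
  toFun := fun A => WithLp.toLp 2 (fun p : Fin d × Fin d => A p.1 p.2)
  invFun := fun x => Matrix.of fun i j => x (i, j)
  map_add' := fun _ _ => rfl
  map_smul' := fun _ _ => rfl
  left_inv := fun _ => rfl
  right_inv := fun _ => rfl

lemma trace_conj_re {d : ℕ} (A : Matrix (Fin d) (Fin d) ℂ) :
    (Matrix.trace (Aᴴ * A)).re = ∑ p : Fin d × Fin d, ‖A p.1 p.2‖ ^ 2 := by
  simp only [Matrix.trace, Matrix.diag, Matrix.mul_apply, Matrix.conjTranspose_apply]
  rw [Complex.re_sum]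
  rw [Fintype.sum_prod_type]
  rw [Finset.sum_comm]
  congr 1; ext j
  rw [Complex.re_sum]
  congr 1; ext i
  show ((starRingEnd ℂ) (A i j) * A i j).re = ‖A i j‖ ^ 2
  rw [← Complex.normSq_eq_conj_mul_self, Complex.ofReal_re, ← Complex.sq_norm]

lemma hsNorm_eq {d : ℕ} (A : Matrix (Fin d) (Fin d) ℂ) : hsNorm A = ‖eE A‖ := by
  rw [hsNorm, EuclideanSpace.norm_eq, trace_conj_re]
  congr 1

lemma gksl_linear {d M : ℕ} (H : ℝ → Matrix (Fin d) (Fin d) ℂ)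
    (L : Fin M → ℝ → Matrix (Fin d) (Fin d) ℂ) (t : ℝ) :
    IsLinearMap ℂ (gksl H L t) := by
  constructor
  · intro x y
    simp only [gksl, mul_add, add_mul, smul_add, smul_sub, sub_eq_add_neg, neg_add,
      Finset.sum_add_distrib]
    abel
  · intro c x
    simp [gksl, mul_smul_comm, smul_mul_assoc, smul_sub, smul_add, smul_smul,
      Finset.smul_sum, mul_comm]

lemma hsNorm_nonneg {d : ℕ} (A : Matrix (Fin d) (Fin d) ℂ) : 0 ≤ hsNorm A := by
  rw [hsNorm_eq]; exact norm_nonneg _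

lemma opNorm2_bound {d : ℕ} {Φ : Matrix (Fin d) (Fin d) ℂ → Matrix (Fin d) (Fin d) ℂ}
    (hΦ : IsLinearMap ℂ Φ) (A : Matrix (Fin d) (Fin d) ℂ) :
    hsNorm (Φ A) ≤ opNorm2 Φ * hsNorm A := by
  set Ψ : EuclideanSpace ℂ (Fin d × Fin d) →L[ℂ] EuclideanSpace ℂ (Fin d × Fin d) :=
    LinearMap.toContinuousLinearMap
      ((eE.toLinearMap.comp hΦ.mk').comp eE.symm.toLinearMap) with hΨdef
  have hΨ : ∀ B, hsNorm (Φ B) = ‖Ψ (eE B)‖ := by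
    intro B
    rw [hsNorm_eq]
    congr 1
  have bdd : BddAbove {r : ℝ | ∃ A, hsNorm A = 1 ∧ r = hsNorm (Φ A)} := by
    refine ⟨‖Ψ‖, ?_⟩
    rintro r ⟨B, hB, rfl⟩
    rw [hΨ]
    calc ‖Ψ (eE B)‖ ≤ ‖Ψ‖ * ‖eE B‖ := Ψ.le_opNorm _
    _ = ‖Ψ‖ := by rw [← hsNorm_eq, hB, mul_one]
  rcases eq_or_ne (hsNorm A) 0 with h0 | h0
  · have hA0 : A = 0 := by
      have : eE A = 0 := by
        rw [hsNorm_eq] at h0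
        exact norm_eq_zero.mp h0
      have := congrArg eE.symm this
      simpa using this
    have h00 : hsNorm (0 : Matrix (Fin d) (Fin d) ℂ) = 0 := by
      rw [hsNorm_eq, _root_.map_zero, norm_zero]
    rw [hA0, hΦ.map_zero, h00, mul_zero]
  · have hpos : 0 < hsNorm A := lt_of_le_of_ne (hsNorm_nonneg A) (Ne.symm h0)
    set r := hsNorm A
    set u := ((r : ℂ))⁻¹ • A with hu
    have hur : hsNorm u = 1 := by
      rw [hsNorm_eq, hu, eE.map_smul, norm_smul, ← hsNorm_eq]
      simp only [norm_inv, Complex.norm_real, Real.norm_eq_abs, abs_of_pos hpos]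
      exact inv_mul_cancel₀ h0
    have hmem : hsNorm (Φ u) ∈ {r : ℝ | ∃ A, hsNorm A = 1 ∧ r = hsNorm (Φ A)} :=
      ⟨u, hur, rfl⟩
    have hle : hsNorm (Φ u) ≤ opNorm2 Φ := le_csSup bdd hmem
    have hAu : A = (r : ℂ) • u := by
      rw [hu, smul_smul, mul_inv_cancel₀ (by exact_mod_cast h0), one_smul]
    calc hsNorm (Φ A) = hsNorm ((r : ℂ) • Φ u) := by rw [hAu, hΦ.map_smul]
    _ = r * hsNorm (Φ u) := by
        rw [hsNorm_eq, eE.map_smul, norm_smul, ← hsNorm_eq]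
        simp [abs_of_pos hpos]
    _ ≤ r * opNorm2 Φ := by exact mul_le_mul_of_nonneg_left hle (le_of_lt hpos)
    _ = opNorm2 Φ * r := mul_comm _ _

/-! ### Auxiliary: trace algebra -/

lemma per_m {d : ℕ} (x l : Matrix (Fin d) (Fin d) ℂ) (hx : xᴴ = x) (hl : lᴴ = l) :
    trace (x * (l*x*l - (2⁻¹:ℂ)•(l^2*x + x*l^2))) =
      -(2⁻¹:ℂ) * trace ((l*x - x*l)ᴴ * (l*x - x*l)) := by
  have hC : (l*x - x*l)ᴴ = x*l - l*x := by
    simp [Matrix.conjTranspose_sub, Matrix.conjTranspose_mul, hx, hl]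
  rw [hC]
  simp only [Matrix.mul_sub, Matrix.sub_mul, Matrix.mul_add, mul_smul_comm, trace_smul,
    trace_sub, trace_add, smul_eq_mul, pow_two, mul_assoc]
  have h1 : trace (l*(x*(l*x))) = trace (x*(l*(x*l))) := by
    rw [trace_mul_comm]; simp [mul_assoc]
  have h2 : trace (x*(x*(l*l))) = trace (x*(l*(l*x))) := by
    rw [trace_mul_comm]; simp [mul_assoc]
  have h3 : trace (l*(x*(x*l))) = trace (x*(l*(l*x))) := by
    rw [trace_mul_comm, ← h2]; simp [mul_assoc]
  rw [h1, h2, h3]; ring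

lemma trace_conj_ofReal {d : ℕ} (C : Matrix (Fin d) (Fin d) ℂ) :
    trace (Cᴴ * C) = ((∑ p : Fin d × Fin d, ‖C p.1 p.2‖ ^ 2 : ℝ) : ℂ) := by
  simp only [Matrix.trace, Matrix.diag, Matrix.mul_apply, Matrix.conjTranspose_apply]
  rw [Complex.ofReal_sum, Fintype.sum_prod_type, Finset.sum_comm]
  refine Finset.sum_congr rfl fun j _ => Finset.sum_congr rfl fun i _ => ?_
  show (starRingEnd ℂ) _ * _ = _
  rw [← Complex.normSq_eq_conj_mul_self, ← Complex.sq_norm]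

lemma eq_zero_of_trace_conj {d : ℕ} (C : Matrix (Fin d) (Fin d) ℂ)
    (h : trace (Cᴴ * C) = 0) : C = 0 := by
  rw [trace_conj_ofReal] at h
  have hs : (∑ p : Fin d × Fin d, ‖C p.1 p.2‖ ^ 2 : ℝ) = 0 := by exact_mod_cast h
  have := (Finset.sum_eq_zero_iff_of_nonneg (fun p _ => sq_nonneg ‖C p.1 p.2‖)).mp hs
  ext i j
  have := this (i, j) (Finset.mem_univ _)
  have : ‖C i j‖ = 0 := by
    have := this
    nlinarith [norm_nonneg (C i j)]
  simpa using norm_eq_zero.mp this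

lemma trace_ham_zero {d : ℕ} (x h : Matrix (Fin d) (Fin d) ℂ) :
    trace (x * ((-Complex.I) • (h * x - x * h))) = 0 := by
  simp only [mul_smul_comm, trace_smul, Matrix.mul_sub, trace_sub, smul_eq_mul]
  have : trace (x * (h * x)) = trace (x * (x * h)) := by
    rw [trace_mul_comm, mul_assoc, trace_mul_comm, mul_assoc]
  rw [this, sub_self, mul_zero]

lemma summand_zero {d : ℕ} (x l : Matrix (Fin d) (Fin d) ℂ) (hc : l * x = x * l) :
    l * x * l - (2⁻¹:ℂ) • (l ^ 2 * x + x * l ^ 2) = 0 := by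
  have e1 : l * x * l = x * l ^ 2 := by rw [hc, mul_assoc, ← pow_two]
  have e2 : l ^ 2 * x = x * l ^ 2 := by
    rw [pow_two, mul_assoc, hc, ← mul_assoc, hc, mul_assoc, ← pow_two]
  rw [e1, e2]
  module

lemma gksl_zero_of_comm {d M : ℕ} (H : ℝ → Matrix (Fin d) (Fin d) ℂ)
    (L : Fin M → ℝ → Matrix (Fin d) (Fin d) ℂ) (t : ℝ) (ρ : Matrix (Fin d) (Fin d) ℂ)
    (hcH : H t * ρ = ρ * H t) (hcL : ∀ m, L m t * ρ = ρ * L m t) :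
    gksl H L t ρ = 0 := by
  rw [gksl, hcH, sub_self, smul_zero, zero_add]
  exact Finset.sum_eq_zero fun m _ => summand_zero ρ (L m t) (hcL m)

lemma comm_of_gksl_zero {d M : ℕ} (H : ℝ → Matrix (Fin d) (Fin d) ℂ)
    (L : Fin M → ℝ → Matrix (Fin d) (Fin d) ℂ) (t : ℝ) (ρ : Matrix (Fin d) (Fin d) ℂ)
    (hH : (H t)ᴴ = H t) (hL : ∀ m, (L m t)ᴴ = L m t) (hρ : ρᴴ = ρ)
    (h : gksl H L t ρ = 0) :
    H t * ρ = ρ * H t ∧ ∀ m, L m t * ρ = ρ * L m t := by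
  have h0 : trace (ρ * gksl H L t ρ) = 0 := by rw [h, mul_zero, trace_zero]
  rw [gksl, mul_add, trace_add, trace_ham_zero, Finset.mul_sum, trace_sum, zero_add] at h0
  have h2 : (-(2⁻¹:ℂ)) * ∑ m : Fin M,
      trace ((L m t * ρ - ρ * L m t)ᴴ * (L m t * ρ - ρ * L m t)) = 0 := by
    rw [Finset.mul_sum, ← h0]
    exact Finset.sum_congr rfl fun m _ => (per_m ρ (L m t) hρ (hL m)).symm
  have h3 : ∑ m : Fin M,
      trace ((L m t * ρ - ρ * L m t)ᴴ * (L m t * ρ - ρ * L m t)) = 0 := by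
    rcases mul_eq_zero.mp h2 with h' | h'
    · norm_num at h'
    · exact h'
  have h4 : ∀ m, L m t * ρ - ρ * L m t = 0 := by
    have h5 : ∑ m : Fin M,
        (∑ p : Fin d × Fin d, ‖(L m t * ρ - ρ * L m t) p.1 p.2‖ ^ 2 : ℝ) = 0 := by
      have := h3
      simp only [trace_conj_ofReal] at this
      exact_mod_cast this
    intro m
    apply eq_zero_of_trace_conj
    rw [trace_conj_ofReal]
    have := (Finset.sum_eq_zero_iff_of_nonneg (fun m _ =>
      Finset.sum_nonneg fun p _ => sq_nonneg _)).mp h5 m (Finset.mem_univ m)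
    rw [this, Complex.ofReal_zero]
  have hLc : ∀ m, L m t * ρ = ρ * L m t := fun m => sub_eq_zero.mp (h4 m)
  refine ⟨?_, hLc⟩
  have hs : (∑ m : Fin M, (L m t * ρ * L m t - (2⁻¹:ℂ) • ((L m t)^2 * ρ + ρ * (L m t)^2))) = 0 :=
    Finset.sum_eq_zero fun m _ => summand_zero ρ (L m t) (hLc m)
  rw [gksl, hs, add_zero, smul_eq_zero] at h
  rcases h with h' | h'
  · exfalso
    rw [neg_eq_zero] at h'
    exact Complex.I_ne_zero h'
  · exact sub_eq_zero.mp h'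

lemma eE_continuous {d : ℕ} :
    Continuous (fun A : Matrix (Fin d) (Fin d) ℂ => eE A) :=
  LinearMap.continuous_of_finiteDimensional eE.toLinearMap

lemma gksl_sub_linear {d M : ℕ} (H : ℝ → Matrix (Fin d) (Fin d) ℂ)
    (L : Fin M → ℝ → Matrix (Fin d) (Fin d) ℂ) (t t0 : ℝ) :
    IsLinearMap ℂ (fun A => gksl H L t A - gksl H L t0 A) := by
  constructor
  · intro x y
    rw [(gksl_linear H L t).map_add, (gksl_linear H L t0).map_add]
    abel
  · intro c x
    rw [(gksl_linear H L t).map_smul, (gksl_linear H L t0).map_smul, smul_sub]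

lemma gksl_apply_contOn {d M : ℕ} (H : ℝ → Matrix (Fin d) (Fin d) ℂ)
    (L : Fin M → ℝ → Matrix (Fin d) (Fin d) ℂ)
    (hQ : CondQ (gksl H L)) (σ : ℝ → Matrix (Fin d) (Fin d) ℂ)
    (hσ : ContinuousOn σ (Set.Ici 0)) :
    ContinuousOn (fun t => eE (gksl H L t (σ t))) (Set.Ici 0) := by
  obtain ⟨Mb, hMbpos, hMb⟩ := hQ.2.1
  intro t0 ht0
  have ht0' : (0:ℝ) ≤ t0 := ht0
  rw [Metric.continuousWithinAt_iff]
  intro ε hε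
  set Cσ := hsNorm (σ t0) + 1 with hCσ
  have hσ0 : 0 ≤ hsNorm (σ t0) := hsNorm_nonneg _
  have hCσpos : 0 < Cσ := by linarith
  set ε1 := min 1 (ε/(2*(Mb+1))) with hε1def
  have hε1pos : 0 < ε1 := lt_min one_pos (by positivity)
  have hσc : ContinuousWithinAt (fun t => eE (σ t)) (Set.Ici 0) t0 :=
    eE_continuous.continuousAt.comp_continuousWithinAt (hσ t0 ht0)
  rw [Metric.continuousWithinAt_iff] at hσc
  obtain ⟨δ1, hδ1pos, hδ1⟩ := hσc ε1 hε1pos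
  set ε2 := ε/(2*(Cσ+1)) with hε2def
  have hε2pos : 0 < ε2 := by positivity
  obtain ⟨δ2, hδ2pos, hδ2⟩ := hQ.1 t0 ht0' ε2 hε2pos
  refine ⟨min δ1 δ2, lt_min hδ1pos hδ2pos, ?_⟩
  intro t ht hdist
  have hd1 : dist t t0 < δ1 := lt_of_lt_of_le hdist (min_le_left _ _)
  have hd2 : |t - t0| < δ2 := by
    rw [← Real.dist_eq]
    exact lt_of_lt_of_le hdist (min_le_right _ _)
  have hσ1 : ‖eE (σ t) - eE (σ t0)‖ < ε1 := by
    have := hδ1 ht hd1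
    rwa [dist_eq_norm] at this
  set Φ := fun A => gksl H L t A - gksl H L t0 A with hΦdef
  have hΦlin : IsLinearMap ℂ Φ := gksl_sub_linear H L t t0
  have hΦnorm : opNorm2 Φ < ε2 := hδ2 t ht hd2
  have hsub : gksl H L t0 (σ t - σ t0) = gksl H L t0 (σ t) - gksl H L t0 (σ t0) :=
    (IsLinearMap.mk' _ (gksl_linear H L t0)).map_sub _ _
  have decomp : eE (gksl H L t (σ t)) - eE (gksl H L t0 (σ t0)) =
      eE (Φ (σ t)) + eE (gksl H L t0 (σ t - σ t0)) := by
    rw [← _root_.map_sub, ← _root_.map_add]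
    congr 1
    rw [hΦdef, hsub]
    exact (sub_add_sub_cancel _ _ _).symm
  have hσb : hsNorm (σ t) ≤ Cσ := by
    have h' := norm_sub_norm_le (eE (σ t)) (eE (σ t0))
    have he1 : ε1 ≤ 1 := min_le_left _ _
    rw [hsNorm_eq]
    rw [hsNorm_eq] at hCσ
    linarith
  have b1 : ‖eE (Φ (σ t))‖ ≤ ε2 * Cσ := by
    rw [← hsNorm_eq]
    calc hsNorm (Φ (σ t)) ≤ opNorm2 Φ * hsNorm (σ t) := opNorm2_bound hΦlin _
    _ ≤ ε2 * Cσ := mul_le_mul (le_of_lt hΦnorm) hσb (hsNorm_nonneg _) (le_of_lt hε2pos)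
  have b2 : ‖eE (gksl H L t0 (σ t - σ t0))‖ ≤ Mb * ε1 := by
    rw [← hsNorm_eq]
    calc hsNorm (gksl H L t0 (σ t - σ t0))
        ≤ opNorm2 (gksl H L t0) * hsNorm (σ t - σ t0) :=
          opNorm2_bound (gksl_linear H L t0) _
    _ ≤ Mb * ε1 := by
        have h2 : hsNorm (σ t - σ t0) ≤ ε1 := by
          rw [hsNorm_eq, _root_.map_sub]
          exact le_of_lt hσ1
        exact mul_le_mul (hMb t0 ht0') h2 (hsNorm_nonneg _) (le_of_lt hMbpos)
  rw [dist_eq_norm]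
  have hA : ε2 * Cσ < ε/2 := by
    have heq : ε2 * (Cσ + 1) = ε/2 := by
      rw [hε2def]
      field_simp
    nlinarith
  have hB : Mb * ε1 < ε/2 := by
    have he1 : ε1 ≤ ε/(2*(Mb+1)) := min_le_right _ _
    have hc : 0 < ε/(2*(Mb+1)) := by positivity
    have heq : (Mb+1) * (ε/(2*(Mb+1))) = ε/2 := by
      field_simp
    nlinarith
  calc ‖eE (gksl H L t (σ t)) - eE (gksl H L t0 (σ t0))‖
      ≤ ‖eE (Φ (σ t))‖ + ‖eE (gksl H L t0 (σ t - σ t0))‖ := by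
        rw [decomp]; exact norm_add_le _ _
  _ ≤ ε2 * Cσ + Mb * ε1 := add_le_add b1 b2
  _ < ε/2 + ε/2 := add_lt_add hA hB
  _ = ε := by ring

noncomputable def ecCLM {d : ℕ} :
    Matrix (Fin d) (Fin d) ℂ →L[ℝ] EuclideanSpace ℂ (Fin d × Fin d) :=
  LinearMap.toContinuousLinearMap (eE.toLinearMap.restrictScalars ℝ)

lemma ecCLM_apply {d : ℕ} (A : Matrix (Fin d) (Fin d) ℂ) : ecCLM A = eE A := rfl

lemma ftc {d M : ℕ} (H : ℝ → Matrix (Fin d) (Fin d) ℂ)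
    (L : Fin M → ℝ → Matrix (Fin d) (Fin d) ℂ) (hQ : CondQ (gksl H L))
    (ρ : ℝ → Matrix (Fin d) (Fin d) ℂ)
    (hρd : ∀ t : ℝ, 0 ≤ t → HasDerivAt ρ (gksl H L t (ρ t)) t)
    (a δ : ℝ) (ha : 0 ≤ a) (hδ : 0 ≤ δ) :
    ∫ s in a..(a+δ), eE (gksl H L s (ρ s)) = eE (ρ (a+δ)) - eE (ρ a) := by
  have hρc : ContinuousOn ρ (Set.Ici 0) := fun t ht =>
    ((hρd t ht).continuousAt).continuousWithinAt
  have hG := gksl_apply_contOn H L hQ ρ hρc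
  refine intervalIntegral.integral_eq_sub_of_hasDerivAt (f := fun t => eE (ρ t))
    (f' := fun s => eE (gksl H L s (ρ s))) ?_ ?_
  · intro t htmem
    rw [Set.uIcc_of_le (by linarith)] at htmem
    have ht0 : (0:ℝ) ≤ t := le_trans ha htmem.1
    have hder := (ecCLM.hasFDerivAt (x := ρ t)).comp_hasDerivAt t (hρd t ht0)
    exact hder
  · apply ContinuousOn.intervalIntegrable
    rw [Set.uIcc_of_le (by linarith)]
    exact hG.mono fun x hx => le_trans ha hx.1

lemma cont_shift {d M : ℕ} (H : ℝ → Matrix (Fin d) (Fin d) ℂ)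
    (L : Fin M → ℝ → Matrix (Fin d) (Fin d) ℂ) (hQ : CondQ (gksl H L))
    (σ : ℝ → Matrix (Fin d) (Fin d) ℂ) (hσ : ContinuousOn σ (Set.Ici 0))
    (c : ℝ) (hc : 0 ≤ c) :
    ContinuousOn (fun s : ℝ => eE (gksl H L (c + s) (σ (c + s)))) (Set.Ici 0) := by
  have hGs := gksl_apply_contOn H L hQ σ hσ
  refine hGs.comp ((continuous_const.add continuous_id).continuousOn) ?_
  intro s hs
  exact add_nonneg hc hs

lemma key_zero {d M : ℕ} (H : ℝ → Matrix (Fin d) (Fin d) ℂ)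
    (L : Fin M → ℝ → Matrix (Fin d) (Fin d) ℂ) (hQ : CondQ (gksl H L))
    (ρ : ℝ → Matrix (Fin d) (Fin d) ℂ) (ρstar : Matrix (Fin d) (Fin d) ℂ)
    (hρd : ∀ t : ℝ, 0 ≤ t → HasDerivAt ρ (gksl H L t (ρ t)) t)
    (hten : Tendsto ρ atTop (nhds ρstar)) :
    ∀ t0 : ℝ, 0 ≤ t0 → gksl H L t0 ρstar = 0 := by
  obtain ⟨Mb, hMbpos, hMb⟩ := hQ.2.1
  have hρc : ContinuousOn ρ (Set.Ici 0) := fun t ht =>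
    ((hρd t ht).continuousAt).continuousWithinAt
  have htenE : Tendsto (fun t => eE (ρ t)) atTop (nhds (eE ρstar)) :=
    (eE_continuous.continuousAt.tendsto).comp hten
  have hsρ0 : 0 ≤ hsNorm ρstar := hsNorm_nonneg _
  intro t0 ht0
  have claim1 : ∀ δ : ℝ, 0 < δ →
      (∫ s in (0:ℝ)..δ, eE (gksl H L (t0+s) ρstar)) = 0 := by
    intro δ hδ
    set I := ∫ s in (0:ℝ)..δ, eE (gksl H L (t0+s) ρstar) with hIdef
    set K := 2 + δ*(hsNorm ρstar + 1 + Mb) with hKdef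
    have hKpos : 0 < K := by nlinarith
    have int1 : IntervalIntegrable (fun s => eE (gksl H L (t0+s) ρstar))
        MeasureTheory.volume 0 δ := by
      apply ContinuousOn.intervalIntegrable
      rw [Set.uIcc_of_le hδ.le]
      exact (cont_shift H L hQ (fun _ => ρstar) continuousOn_const t0 ht0).mono
        Set.Icc_subset_Ici_self
    have bound : ∀ ε : ℝ, 0 < ε → ε ≤ 1 → ‖I‖ ≤ ε * K := by
      intro ε hε hε1
      obtain ⟨ts, hts0, htsgrow, htsapp⟩ := hQ.2.2 ε hε δ hδ t0 ht0
      obtain ⟨N, hN⟩ := (Metric.tendsto_atTop.mp htenE) ε hε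
      have hgrow : ∀ n : ℕ, ts 0 + n*δ ≤ ts n := by
        intro n
        induction n with
        | zero => simp
        | succ k ih =>
          have := htsgrow k
          push_cast
          push_cast at ih
          nlinarith
      obtain ⟨n0, hn0⟩ := exists_nat_ge ((N - ts 0)/δ)
      set a := ts n0 with ha
      have haN : N ≤ a := by
        have h' : (N - ts 0)/δ * δ ≤ (n0:ℝ) * δ := mul_le_mul_of_nonneg_right hn0 hδ.le
        rw [div_mul_cancel₀ _ (ne_of_gt hδ)] at h'
        have := hgrow n0
        linarith
      have ha0 : 0 ≤ a := hts0 n0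
      have hftc := ftc H L hQ ρ hρd a δ ha0 hδ.le
      have hshift : (∫ s in (0:ℝ)..δ, eE (gksl H L (a+s) (ρ (a+s)))) =
          ∫ s in a..(a+δ), eE (gksl H L s (ρ s)) := by
        rw [intervalIntegral.integral_comp_add_left (fun s => eE (gksl H L s (ρ s))) a]
        norm_num
      have int2 : IntervalIntegrable (fun s => eE (gksl H L (a+s) (ρ (a+s))))
          MeasureTheory.volume 0 δ := by
        apply ContinuousOn.intervalIntegrable
        rw [Set.uIcc_of_le hδ.le]
        exact (cont_shift H L hQ ρ hρc a ha0).mono Set.Icc_subset_Ici_self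
      have pt : ∀ s ∈ Set.Ioc (0:ℝ) δ,
          ‖eE (gksl H L (t0+s) ρstar) - eE (gksl H L (a+s) (ρ (a+s)))‖ ≤
            ε * (hsNorm ρstar + 1 + Mb) := by
        intro s hs
        have hs0 : (0:ℝ) ≤ s := hs.1.le
        have hsδ : s ≤ δ := hs.2
        have hnear : ‖eE (ρ (a+s)) - eE ρstar‖ < ε := by
          have := hN (a+s) (by linarith)
          rwa [dist_eq_norm] at this
        set Φ := fun A => gksl H L (a+s) A - gksl H L (t0+s) A with hΦdef
        have hΦnorm : opNorm2 Φ < ε := htsapp n0 s ⟨hs0, hsδ⟩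
        have hΦlin : IsLinearMap ℂ Φ := gksl_sub_linear H L (a+s) (t0+s)
        have hsub : gksl H L (t0+s) (ρ (a+s) - ρstar) =
            gksl H L (t0+s) (ρ (a+s)) - gksl H L (t0+s) ρstar :=
          (IsLinearMap.mk' _ (gksl_linear H L (t0+s))).map_sub _ _
        have decomp : eE (gksl H L (a+s) (ρ (a+s))) - eE (gksl H L (t0+s) ρstar) =
            eE (Φ (ρ (a+s))) + eE (gksl H L (t0+s) (ρ (a+s) - ρstar)) := by
          rw [← _root_.map_sub, ← _root_.map_add]
          congr 1
          rw [hΦdef, hsub]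
          exact (sub_add_sub_cancel _ _ _).symm
        have hρb : hsNorm (ρ (a+s)) ≤ hsNorm ρstar + 1 := by
          have h' := norm_sub_norm_le (eE (ρ (a+s))) (eE ρstar)
          have h'' := hsNorm_eq ρstar
          rw [hsNorm_eq]
          linarith
        have b1 : ‖eE (Φ (ρ (a+s)))‖ ≤ ε * (hsNorm ρstar + 1) := by
          rw [← hsNorm_eq]
          calc hsNorm (Φ (ρ (a+s))) ≤ opNorm2 Φ * hsNorm (ρ (a+s)) := opNorm2_bound hΦlin _
          _ ≤ ε * (hsNorm ρstar + 1) :=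
              mul_le_mul hΦnorm.le hρb (hsNorm_nonneg _) hε.le
        have b2 : ‖eE (gksl H L (t0+s) (ρ (a+s) - ρstar))‖ ≤ Mb * ε := by
          rw [← hsNorm_eq]
          calc hsNorm (gksl H L (t0+s) (ρ (a+s) - ρstar))
              ≤ opNorm2 (gksl H L (t0+s)) * hsNorm (ρ (a+s) - ρstar) :=
                opNorm2_bound (gksl_linear H L (t0+s)) _
          _ ≤ Mb * ε := by
              have hh : hsNorm (ρ (a+s) - ρstar) ≤ ε := by
                rw [hsNorm_eq, _root_.map_sub]
                exact hnear.le
              exact mul_le_mul (hMb (t0+s) (by linarith)) hh (hsNorm_nonneg _) hMbpos.le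
        rw [norm_sub_rev, decomp]
        calc ‖eE (Φ (ρ (a+s))) + eE (gksl H L (t0+s) (ρ (a+s) - ρstar))‖
            ≤ ‖eE (Φ (ρ (a+s)))‖ + ‖eE (gksl H L (t0+s) (ρ (a+s) - ρstar))‖ :=
              norm_add_le _ _
        _ ≤ ε * (hsNorm ρstar + 1) + Mb * ε := add_le_add b1 b2
        _ = ε * (hsNorm ρstar + 1 + Mb) := by ring
      have hdiffnorm : ‖∫ s in (0:ℝ)..δ,
          (eE (gksl H L (t0+s) ρstar) - eE (gksl H L (a+s) (ρ (a+s))))‖ ≤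
            ε * (hsNorm ρstar + 1 + Mb) * |δ - 0| := by
        apply intervalIntegral.norm_integral_le_of_norm_le_const
        intro x hx
        rw [Set.uIoc_of_le hδ.le] at hx
        exact pt x hx
      have hdiff : (∫ s in (0:ℝ)..δ,
          (eE (gksl H L (t0+s) ρstar) - eE (gksl H L (a+s) (ρ (a+s))))) =
            I - ∫ s in (0:ℝ)..δ, eE (gksl H L (a+s) (ρ (a+s))) :=
        intervalIntegral.integral_sub int1 int2
      have hend : ‖eE (ρ (a+δ)) - eE (ρ a)‖ ≤ 2*ε := by
        have h1 := hN (a+δ) (by linarith)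
        have h2 := hN a (by linarith)
        rw [dist_eq_norm] at h1 h2
        have h3 : eE (ρ (a+δ)) - eE (ρ a) =
            (eE (ρ (a+δ)) - eE ρstar) - (eE (ρ a) - eE ρstar) := by abel
        rw [h3]
        calc ‖(eE (ρ (a+δ)) - eE ρstar) - (eE (ρ a) - eE ρstar)‖
            ≤ ‖eE (ρ (a+δ)) - eE ρstar‖ + ‖eE (ρ a) - eE ρstar‖ := norm_sub_le _ _
        _ ≤ 2*ε := by linarith
      have hIsplit : I = (∫ s in (0:ℝ)..δ,
          (eE (gksl H L (t0+s) ρstar) - eE (gksl H L (a+s) (ρ (a+s))))) +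
            (eE (ρ (a+δ)) - eE (ρ a)) := by
        rw [hdiff, hshift, hftc]
        abel
      rw [hIsplit]
      calc ‖_ + (eE (ρ (a+δ)) - eE (ρ a))‖
          ≤ ‖∫ s in (0:ℝ)..δ,
              (eE (gksl H L (t0+s) ρstar) - eE (gksl H L (a+s) (ρ (a+s))))‖ +
            ‖eE (ρ (a+δ)) - eE (ρ a)‖ := norm_add_le _ _
      _ ≤ ε * (hsNorm ρstar + 1 + Mb) * |δ - 0| + 2*ε := add_le_add hdiffnorm hend
      _ = ε * K := by
          rw [abs_of_nonneg (by linarith : (0:ℝ) ≤ δ - 0)]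
          rw [hKdef]
          ring
    by_contra hne
    have hpos : 0 < ‖I‖ := norm_pos_iff.mpr hne
    set ε := min 1 (‖I‖/(2*K)) with hεdef
    have hεpos : 0 < ε := lt_min one_pos (by positivity)
    have hb := bound ε hεpos (min_le_left _ _)
    have hle : ε * K ≤ ‖I‖/2 := by
      have h' : ε ≤ ‖I‖/(2*K) := min_le_right _ _
      calc ε*K ≤ (‖I‖/(2*K))*K := mul_le_mul_of_nonneg_right h' hKpos.le
      _ = ‖I‖/2 := by field_simp
    have hcontr := le_trans hb hle
    linarith [hpos, hcontr]
  have hcomp : ContinuousOn (fun s : ℝ => eE (gksl H L (t0+s) ρstar)) (Set.Ici 0) :=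
    cont_shift H L hQ (fun _ => ρstar) continuousOn_const t0 ht0
  suffices h0 : eE (gksl H L t0 ρstar) = 0 by
    have := congrArg eE.symm h0
    simpa using this
  have hsmall : ∀ ε : ℝ, 0 < ε → ‖eE (gksl H L t0 ρstar)‖ ≤ ε := by
    intro ε hε
    have hcw : ContinuousWithinAt (fun s : ℝ => eE (gksl H L (t0+s) ρstar))
        (Set.Ici 0) 0 := hcomp 0 Set.self_mem_Ici
    rw [Metric.continuousWithinAt_iff] at hcw
    obtain ⟨δ0, hδ0pos, hδ0⟩ := hcw (ε/2) (by positivity)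
    set δ := δ0/2 with hδdef
    have hδpos : 0 < δ := by positivity
    have hIδ := claim1 δ hδpos
    have intc : IntervalIntegrable (fun s => eE (gksl H L (t0+s) ρstar))
        MeasureTheory.volume 0 δ := by
      apply ContinuousOn.intervalIntegrable
      rw [Set.uIcc_of_le hδpos.le]
      exact hcomp.mono Set.Icc_subset_Ici_self
    have e0 : (∫ s in (0:ℝ)..δ,
        (eE (gksl H L (t0+0) ρstar) - eE (gksl H L (t0+s) ρstar))) =
          δ • eE (gksl H L (t0+0) ρstar) := by
      rw [intervalIntegral.integral_sub intervalIntegrable_const intc, hIδ,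
        intervalIntegral.integral_const, sub_zero, sub_zero]
    have ebound : ‖∫ s in (0:ℝ)..δ,
        (eE (gksl H L (t0+0) ρstar) - eE (gksl H L (t0+s) ρstar))‖ ≤ (ε/2) * |δ - 0| := by
      apply intervalIntegral.norm_integral_le_of_norm_le_const
      intro x hx
      rw [Set.uIoc_of_le hδpos.le] at hx
      have hx0 : (0:ℝ) ≤ x := hx.1.le
      have hxd : dist x (0:ℝ) < δ0 := by
        rw [Real.dist_eq, sub_zero, abs_of_nonneg hx0]
        have := hx.2
        rw [hδdef] at this
        linarith
      have := hδ0 hx0 hxd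
      rw [dist_eq_norm] at this
      rw [norm_sub_rev]
      exact this.le
    rw [e0] at ebound
    rw [norm_smul, Real.norm_eq_abs, abs_of_pos hδpos] at ebound
    rw [abs_of_nonneg (by linarith : (0:ℝ) ≤ δ - 0)] at ebound
    have : ‖eE (gksl H L (t0+0) ρstar)‖ ≤ ε/2 := by
      have h' : δ * ‖eE (gksl H L (t0+0) ρstar)‖ ≤ (ε/2) * δ := by linarith [ebound]
      nlinarith [norm_nonneg (eE (gksl H L (t0+0) ρstar))]
    rw [show t0 + 0 = t0 by ring] at this
    linarith
  have : ‖eE (gksl H L t0 ρstar)‖ ≤ 0 := by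
    by_contra hc
    push_neg at hc
    have := hsmall (‖eE (gksl H L t0 ρstar)‖/2) (by linarith)
    linarith
  exact norm_eq_zero.mp (le_antisymm this (norm_nonneg _))

/-- a time-independent density matrix is a limit of some solution
iff it is a strong symmetry in the Schrödinger picture. -/
theorem stmt3 {d M : ℕ} (hd : 0 < d)
    (H : ℝ → Matrix (Fin d) (Fin d) ℂ)
    (L : Fin M → ℝ → Matrix (Fin d) (Fin d) ℂ)
    (hH : ∀ t : ℝ, 0 ≤ t → (H t).IsHermitian)
    (hL : ∀ m, ∀ t : ℝ, 0 ≤ t → (L m t).IsHermitian)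
    (hQ : CondQ (gksl H L))
    (ρstar : Matrix (Fin d) (Fin d) ℂ) (hρstar : IsDensity ρstar) :
    (∃ ρ0 : Matrix (Fin d) (Fin d) ℂ, IsDensity ρ0 ∧
      ∃ ρ : ℝ → Matrix (Fin d) (Fin d) ℂ, ρ 0 = ρ0 ∧
        (∀ t : ℝ, 0 ≤ t → HasDerivAt ρ (gksl H L t (ρ t)) t) ∧
        Tendsto ρ atTop (nhds ρstar))
      ↔
    ((∀ t : ℝ, 0 ≤ t → Commute (H t) ρstar) ∧
      ∀ m, ∀ t : ℝ, 0 ≤ t → Commute (L m t) ρstar) := by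
  constructor
  · rintro ⟨ρ0, hρ0, ρ, hρinit, hρd, hten⟩
    have hz := key_zero H L hQ ρ ρstar hρd hten
    have hherm : ρstarᴴ = ρstar := hρstar.1.1
    have hcomm : ∀ t : ℝ, 0 ≤ t →
        H t * ρstar = ρstar * H t ∧ ∀ m, L m t * ρstar = ρstar * L m t := by
      intro t ht
      exact comm_of_gksl_zero H L t ρstar (hH t ht) (fun m => hL m t ht) hherm (hz t ht)
    exact ⟨fun t ht => (hcomm t ht).1, fun m t ht => (hcomm t ht).2 m⟩
  · rintro ⟨hcH, hcL⟩
    refine ⟨ρstar, hρstar, fun _ => ρstar, rfl, ?_, tendsto_const_nhds⟩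
    intro t ht
    have hz : gksl H L t ρstar = 0 :=
      gksl_zero_of_comm H L t ρstar (hcH t ht) (fun m => hcL m t ht)
    rw [hz]
    exact hasDerivAt_const t ρstar
end

section
/- In the boundary-dissipated Majorana chain, for every integer n with 0 ≤ n ≤ 2V − 1, the n-fold adjoint of the jump operator family has the form ad^n(L)(t) = f_{n,t} γ_{n+1} + Σ_{j=1}^{n} g_{n,j}(t) γ_j, where each g_{n,j} : ℝ → ℂ is a smooth function of t and f_{2m,t} = 2^{2m} √κ B^m cos^m(ωt), f_{2m+1,t} = 2^{2m+1} √κ B^{m+1} cos^{m+1}(ωt). -/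
open Matrix Filter
open scoped ComplexOrder

attribute [local instance] Matrix.normedAddCommGroup Matrix.normedSpace

/-- Hamiltonian of the boundary-dissipated Majorana chain. -/
noncomputable def majH {d : ℕ} (V : ℕ) (γ : ℕ → Matrix (Fin d) (Fin d) ℂ) (B ω : ℝ) :
    ℝ → Matrix (Fin d) (Fin d) ℂ := fun t =>
  (Complex.I * ((B * Real.cos (ω * t) : ℝ) : ℂ)) •
      ∑ j ∈ Finset.Icc 1 V, γ (2 * j - 1) * γ (2 * j)
    + Complex.I • ∑ j ∈ Finset.Icc 1 (V - 1), γ (2 * j) * γ (2 * j + 1)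

/-- Jump operator of the boundary-dissipated Majorana chain. -/
noncomputable def majL {d : ℕ} (γ : ℕ → Matrix (Fin d) (Fin d) ℂ) (κ : ℝ) :
    ℝ → Matrix (Fin d) (Fin d) ℂ := fun _ => ((Real.sqrt κ : ℝ) : ℂ) • γ 1

section cliff
variable {d V : ℕ} (γ : ℕ → Matrix (Fin d) (Fin d) ℂ)
  (hcliff : ∀ j ∈ Finset.Icc 1 (2 * V), ∀ k ∈ Finset.Icc 1 (2 * V),
      γ j * γ k + γ k * γ j = if j = k then (2 : ℂ) • (1 : Matrix (Fin d) (Fin d) ℂ) else 0)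

include hcliff

lemma gsq (a : ℕ) (ha : a ∈ Finset.Icc 1 (2*V)) : γ a * γ a = 1 := by
  have h := hcliff a ha a ha
  rw [if_pos rfl] at h
  have h2 : (2:ℂ) • (γ a * γ a) = (2:ℂ) • (1 : Matrix (Fin d) (Fin d) ℂ) := by
    rw [two_smul]; exact h
  exact smul_right_injective _ (two_ne_zero) h2

lemma ganti (a b : ℕ) (ha : a ∈ Finset.Icc 1 (2*V)) (hb : b ∈ Finset.Icc 1 (2*V))
    (hab : a ≠ b) : γ a * γ b = -(γ b * γ a) := by
  have h := hcliff a ha b hb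
  rw [if_neg hab] at h
  exact eq_neg_of_add_eq_zero_left h

lemma comm3 (a b c : ℕ) (ha : a ∈ Finset.Icc 1 (2*V)) (hb : b ∈ Finset.Icc 1 (2*V))
    (hc : c ∈ Finset.Icc 1 (2*V)) (hab : a ≠ b) :
    γ a * γ b * γ c - γ c * (γ a * γ b)
      = if c = a then (-2 : ℂ) • γ b else if c = b then (2 : ℂ) • γ a else 0 := by
  rcases eq_or_ne c a with rfl | hca
  · rw [if_pos rfl]
    have hsq := gsq γ hcliff c hc
    have h1 : γ c * γ b * γ c = -γ b := by
      calc γ c * γ b * γ c = γ c * (γ b * γ c) := mul_assoc _ _ _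
        _ = γ c * -(γ c * γ b) := by rw [ganti γ hcliff b c hb hc (Ne.symm hab)]
        _ = -(γ c * γ c * γ b) := by rw [mul_neg, mul_assoc]
        _ = -γ b := by rw [hsq, one_mul]
    have h2 : γ c * (γ c * γ b) = γ b := by rw [← mul_assoc, hsq, one_mul]
    rw [h1, h2, neg_smul, two_smul, neg_add]; abel
  · rw [if_neg hca]
    rcases eq_or_ne c b with rfl | hcb
    · rw [if_pos rfl]
      have hsq := gsq γ hcliff c hc
      have h1 : γ a * γ c * γ c = γ a := by rw [mul_assoc, hsq, mul_one]
      have h2 : γ c * (γ a * γ c) = -γ a := by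
        calc γ c * (γ a * γ c) = γ c * γ a * γ c := (mul_assoc _ _ _).symm
          _ = -(γ a * γ c) * γ c := by rw [ganti γ hcliff c a hc ha hca]
          _ = -(γ a * (γ c * γ c)) := by rw [neg_mul, mul_assoc]
          _ = -γ a := by rw [hsq, mul_one]
      rw [h1, h2, sub_neg_eq_add, two_smul]
    · rw [if_neg hcb, sub_eq_zero]
      calc γ a * γ b * γ c = γ a * (γ b * γ c) := mul_assoc _ _ _
        _ = γ a * -(γ c * γ b) := by rw [ganti γ hcliff b c hb hc (Ne.symm hcb)]
        _ = -(γ a * γ c * γ b) := by rw [mul_neg, mul_assoc]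
        _ = -(-(γ c * γ a) * γ b) := by rw [ganti γ hcliff a c ha hc (Ne.symm hca)]
        _ = γ c * (γ a * γ b) := by rw [neg_mul, neg_neg, mul_assoc]
end cliff

section sums
variable {d V : ℕ} (γ : ℕ → Matrix (Fin d) (Fin d) ℂ)
  (hcliff : ∀ j ∈ Finset.Icc 1 (2 * V), ∀ k ∈ Finset.Icc 1 (2 * V),
      γ j * γ k + γ k * γ j = if j = k then (2 : ℂ) • (1 : Matrix (Fin d) (Fin d) ℂ) else 0)

include hcliff

lemma sumS1 (c : ℕ) (hc : c ∈ Finset.Icc 1 (2*V)) :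
    (∑ j ∈ Finset.Icc 1 V, γ (2*j-1) * γ (2*j)) * γ c
      - γ c * ∑ j ∈ Finset.Icc 1 V, γ (2*j-1) * γ (2*j)
    = if c % 2 = 1 then (-2 : ℂ) • γ (c+1) else (2 : ℂ) • γ (c-1) := by
  simp only [Finset.mem_Icc] at hc
  rw [Finset.sum_mul, Finset.mul_sum, ← Finset.sum_sub_distrib]
  have key : ∀ j ∈ Finset.Icc 1 V,
      γ (2*j-1) * γ (2*j) * γ c - γ c * (γ (2*j-1) * γ (2*j))
        = if c = 2*j-1 then (-2 : ℂ) • γ (2*j) else if c = 2*j then (2 : ℂ) • γ (2*j-1) else 0 := by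
    intro j hj
    simp only [Finset.mem_Icc] at hj
    exact comm3 γ hcliff _ _ _ (by simp only [Finset.mem_Icc]; omega)
      (by simp only [Finset.mem_Icc]; omega) (by simp only [Finset.mem_Icc]; omega) (by omega)
  rw [Finset.sum_congr rfl key, Finset.sum_eq_single ((c+1)/2)]
  · rcases Nat.mod_two_eq_zero_or_one c with h | h
    · rw [if_neg (by omega), if_pos (by omega), if_neg (by omega)]
      rw [show 2 * ((c+1)/2) - 1 = c - 1 by omega]

    · rw [if_pos (by omega), if_pos h]
      rw [show 2 * ((c+1)/2) = c + 1 by omega]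

  · intro b _ hb
    rw [if_neg (by omega), if_neg (by omega)]
  · intro h
    exact absurd (by simp only [Finset.mem_Icc]; omega) h

lemma sumS2 (c : ℕ) (hc : c ∈ Finset.Icc 1 (2*V)) :
    (∑ j ∈ Finset.Icc 1 (V-1), γ (2*j) * γ (2*j+1)) * γ c
      - γ c * ∑ j ∈ Finset.Icc 1 (V-1), γ (2*j) * γ (2*j+1)
    = if c % 2 = 1 then (if c = 1 then 0 else (2 : ℂ) • γ (c-1))
      else (if c < 2*V then (-2 : ℂ) • γ (c+1) else 0) := by
  simp only [Finset.mem_Icc] at hc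
  rw [Finset.sum_mul, Finset.mul_sum, ← Finset.sum_sub_distrib]
  have key : ∀ j ∈ Finset.Icc 1 (V-1),
      γ (2*j) * γ (2*j+1) * γ c - γ c * (γ (2*j) * γ (2*j+1))
        = if c = 2*j then (-2 : ℂ) • γ (2*j+1) else if c = 2*j+1 then (2 : ℂ) • γ (2*j) else 0 := by
    intro j hj
    simp only [Finset.mem_Icc] at hj
    exact comm3 γ hcliff _ _ _ (by simp only [Finset.mem_Icc]; omega)
      (by simp only [Finset.mem_Icc]; omega) (by simp only [Finset.mem_Icc]; omega) (by omega)
  rw [Finset.sum_congr rfl key]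
  rcases Nat.mod_two_eq_zero_or_one c with h | h
  · -- c even
    rw [if_neg (by omega)]
    rcases Nat.lt_or_ge c (2*V) with hlt | hge
    · rw [Finset.sum_eq_single (c/2)]
      · rw [if_pos (by omega), if_pos hlt]
        have harg : 2 * (c / 2) + 1 = c + 1 := by omega
        rw [harg]
      · intro b hb hbne
        simp only [Finset.mem_Icc] at hb
        rw [if_neg (by omega), if_neg (by omega)]
      · intro hmem
        exact absurd (by simp only [Finset.mem_Icc]; omega) hmem
    · rw [if_neg (by omega), Finset.sum_eq_zero]
      intro j hj
      simp only [Finset.mem_Icc] at hj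
      rw [if_neg (by omega), if_neg (by omega)]
  · -- c odd
    rw [if_pos h]
    rcases eq_or_ne c 1 with rfl | hc1
    · rw [if_pos rfl, Finset.sum_eq_zero]
      intro j hj
      simp only [Finset.mem_Icc] at hj
      rw [if_neg (by omega), if_neg (by omega)]
    · rw [if_neg hc1, Finset.sum_eq_single (c/2)]
      · rw [if_neg (by omega), if_pos (by omega)]
        have harg : 2 * (c / 2) = c - 1 := by omega
        rw [harg]
      · intro b hb hbne
        simp only [Finset.mem_Icc] at hb
        rw [if_neg (by omega), if_neg (by omega)]
      · intro hmem
        exact absurd (by simp only [Finset.mem_Icc]; omega) hmem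
end sums

noncomputable def bc (B ω : ℝ) (t : ℝ) : ℂ := ((B * Real.cos (ω * t) : ℝ) : ℂ)

lemma bc_smooth (B ω : ℝ) : ContDiff ℝ (⊤ : ℕ∞) (bc B ω) := by
  have h : ContDiff ℝ (⊤ : ℕ∞) (fun t : ℝ => B * Real.cos (ω * t)) :=
    contDiff_const.mul (Real.contDiff_cos.comp (contDiff_const.mul contDiff_id))
  exact Complex.ofRealCLM.contDiff.comp h

lemma deriv_smooth (f : ℝ → ℂ) (h : ContDiff ℝ (⊤ : ℕ∞) f) : ContDiff ℝ (⊤ : ℕ∞) (deriv f) := by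
  exact (contDiff_infty_iff_deriv.mp h).2

noncomputable def uu (V : ℕ) (B ω : ℝ) (c : ℕ) : ℝ → ℂ :=
  if c % 2 = 1 then (fun t => 2 * bc B ω t) else (if c < 2 * V then (fun _ => 2) else fun _ => 0)

noncomputable def vv (B ω : ℝ) (c : ℕ) : ℝ → ℂ :=
  if c % 2 = 1 then (if c = 1 then fun _ => 0 else fun _ => -2) else (fun t => -(2 * bc B ω t))

lemma uu_smooth (V : ℕ) (B ω : ℝ) (c : ℕ) : ContDiff ℝ (⊤ : ℕ∞) (uu V B ω c) := by
  unfold uu; split_ifs <;> first | exact contDiff_const.mul (bc_smooth B ω) | exact contDiff_const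

lemma vv_smooth (B ω : ℝ) (c : ℕ) : ContDiff ℝ (⊤ : ℕ∞) (vv B ω c) := by
  unfold vv; split_ifs <;>
    first | exact (contDiff_const.mul (bc_smooth B ω)).neg | exact contDiff_const

noncomputable def Fco (κ B ω : ℝ) (n : ℕ) : ℝ → ℂ :=
  fun t => ((2 ^ n * Real.sqrt κ : ℝ) : ℂ) * (bc B ω t) ^ ((n + 1) / 2)

lemma Fco_smooth (κ B ω : ℝ) (n : ℕ) : ContDiff ℝ (⊤ : ℕ∞) (Fco κ B ω n) :=
  contDiff_const.mul ((bc_smooth B ω).pow _)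

section key
variable {d V : ℕ} (γ : ℕ → Matrix (Fin d) (Fin d) ℂ)
  (hcliff : ∀ j ∈ Finset.Icc 1 (2 * V), ∀ k ∈ Finset.Icc 1 (2 * V),
      γ j * γ k + γ k * γ j = if j = k then (2 : ℂ) • (1 : Matrix (Fin d) (Fin d) ℂ) else 0)

include hcliff

lemma keyComm (B ω : ℝ) (c : ℕ) (hc : c ∈ Finset.Icc 1 (2*V)) (t : ℝ) :
    Complex.I • (majH V γ B ω t * γ c - γ c * majH V γ B ω t)
      = uu V B ω c t • γ (c+1) + vv B ω c t • γ (c-1) := by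
  have expand : majH V γ B ω t * γ c - γ c * majH V γ B ω t
      = (Complex.I * bc B ω t) •
          ((∑ j ∈ Finset.Icc 1 V, γ (2*j-1) * γ (2*j)) * γ c
            - γ c * ∑ j ∈ Finset.Icc 1 V, γ (2*j-1) * γ (2*j))
        + Complex.I •
          ((∑ j ∈ Finset.Icc 1 (V-1), γ (2*j) * γ (2*j+1)) * γ c
            - γ c * ∑ j ∈ Finset.Icc 1 (V-1), γ (2*j) * γ (2*j+1)) := by
    simp only [majH, bc, add_mul, mul_add, smul_mul_assoc, mul_smul_comm, smul_sub]
    abel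
  rw [expand, smul_add, smul_smul, smul_smul, sumS1 γ hcliff c hc, sumS2 γ hcliff c hc]
  have hI : Complex.I * (Complex.I * bc B ω t) = -(bc B ω t) := by
    rw [← mul_assoc, Complex.I_mul_I, neg_one_mul]
  have hII : Complex.I * Complex.I = -1 := Complex.I_mul_I
  rw [hI, hII]
  simp only [Finset.mem_Icc] at hc
  rcases Nat.mod_two_eq_zero_or_one c with h | h
  · simp only [uu, vv, h, if_neg (by omega : ¬ (0 : ℕ) = 1)]
    rcases Nat.lt_or_ge c (2*V) with hlt | hge
    · simp only [if_pos hlt, smul_smul]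
      module
    · simp only [if_neg (by omega : ¬ c < 2*V), smul_smul, smul_zero]
      module
  · simp only [uu, vv, h, eq_self_iff_true, if_true]
    rcases eq_or_ne c 1 with rfl | hc1
    · simp only [eq_self_iff_true, if_true, smul_smul]
      module
    · simp only [if_neg hc1, smul_smul]
      module
end key

lemma sum_shift {M : Type*} [AddCommMonoid M] (b : ℕ) (f : ℕ → M) :
    ∑ j ∈ Finset.Icc 2 (b+1), f j = ∑ i ∈ Finset.Icc 1 b, f (i+1) := by
  rw [show (2:ℕ) = 1 + 1 from rfl, ← Finset.map_add_right_Icc 1 b 1, Finset.sum_map]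
  rfl

lemma Icc_bot (a b : ℕ) (h : a ≤ b) : Finset.Icc a b = insert a (Finset.Icc (a+1) b) := by
  ext x
  simp only [Finset.mem_Icc, Finset.mem_insert]
  omega

section main
variable {d V : ℕ} (γ : ℕ → Matrix (Fin d) (Fin d) ℂ)
  (hcliff : ∀ j ∈ Finset.Icc 1 (2 * V), ∀ k ∈ Finset.Icc 1 (2 * V),
      γ j * γ k + γ k * γ j = if j = k then (2 : ℂ) • (1 : Matrix (Fin d) (Fin d) ℂ) else 0)

include hcliff

lemma mainRep (B ω κ : ℝ) :
    ∀ n : ℕ, n + 1 ≤ 2 * V → ∃ c : ℕ → ℝ → ℂ,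
      (∀ j, ContDiff ℝ (⊤ : ℕ∞) (c j)) ∧
      (∀ j, j = 0 ∨ n + 1 < j → c j = fun _ => 0) ∧
      (c (n+1) = Fco κ B ω n) ∧
      (∀ t, adPow (majH V γ B ω) n (majL γ κ) t = ∑ j ∈ Finset.Icc 1 (n+1), c j t • γ j) := by
  intro n
  induction n with
  | zero =>
    intro _
    refine ⟨fun j => if j = 1 then Fco κ B ω 0 else fun _ => 0, ?_, ?_, ?_, ?_⟩
    · intro j
      rcases eq_or_ne j 1 with rfl | h
      · simpa using Fco_smooth κ B ω 0
      · simpa [h] using (contDiff_const : ContDiff ℝ (⊤ : ℕ∞) fun _ : ℝ => (0:ℂ))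
    · intro j hj
      have h1 : j ≠ 1 := by omega
      simp [h1]
    · simp
    · intro t
      simp [adPow, majL, Fco, bc]
  | succ n ih =>
    intro hn
    obtain ⟨c, hsm, hsupp, hlead, hrep⟩ := ih (by omega)
    have hfun : adPow (majH V γ B ω) n (majL γ κ)
        = fun t => ∑ j ∈ Finset.Icc 1 (n+1), c j t • γ j := funext hrep
    have hc0 : ∀ x : ℝ, c 0 x = 0 := fun x => by rw [hsupp 0 (Or.inl rfl)]
    refine ⟨fun j t => c (j-1) t * uu V B ω (j-1) t + c (j+1) t * vv B ω (j+1) t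
      + deriv (c j) t, ?_, ?_, ?_, ?_⟩
    · intro j
      exact (((hsm _).mul (uu_smooth V B ω _)).add ((hsm _).mul (vv_smooth B ω _))).add
        (deriv_smooth _ (hsm j))
    · intro j hj
      rcases hj with rfl | hj
      · have h0 : c 0 = fun _ => 0 := hsupp 0 (Or.inl rfl)
        funext t
        simp [h0, vv]
      · have h1 : c (j-1) = fun _ => 0 := hsupp _ (Or.inr (by omega))
        have h2 : c (j+1) = fun _ => 0 := hsupp _ (Or.inr (by omega))
        have h3 : c j = fun _ => 0 := hsupp _ (Or.inr (by omega))
        funext t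
        simp [h1, h2, h3]
    · -- leading coefficient
      have h2 : c (n+1+1+1) = fun _ => 0 := hsupp _ (Or.inr (by omega))
      have h3 : c (n+1+1) = fun _ => 0 := hsupp _ (Or.inr (by omega))
      funext t
      simp only [Nat.add_sub_cancel, hlead, h2, h3, deriv_const, zero_mul, add_zero]
      rcases Nat.mod_two_eq_zero_or_one n with h | h
      · -- n even, n+1 odd
        simp only [uu, if_pos (by omega : (n+1) % 2 = 1), Fco,
          show (n+1+1)/2 = (n+1)/2 + 1 by omega]
        push_cast
        ring
      · -- n odd, n+1 even
        simp only [uu, if_neg (by omega : ¬ (n+1) % 2 = 1), if_pos (by omega : n+1 < 2*V), Fco,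
          show (n+1+1)/2 = (n+1)/2 by omega]
        push_cast
        ring
    · -- representation
      intro t
      show adOp (majH V γ B ω) (adPow (majH V γ B ω) n (majL γ κ)) t = _
      rw [hfun]
      simp only [adOp]
      have hd : HasDerivAt (fun t => ∑ j ∈ Finset.Icc 1 (n+1), c j t • γ j)
          (∑ j ∈ Finset.Icc 1 (n+1), deriv (c j) t • γ j) t :=
        HasDerivAt.fun_sum (fun j _ =>
          (((hsm j).differentiable (by simp)) t).hasDerivAt.smul_const (γ j))
      rw [show deriv (fun t => ∑ j ∈ Finset.Icc 1 (n+1), c j t • γ j) t = _ from hd.deriv]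
      have hcm : Complex.I • (majH V γ B ω t * (∑ j ∈ Finset.Icc 1 (n+1), c j t • γ j)
            - (∑ j ∈ Finset.Icc 1 (n+1), c j t • γ j) * majH V γ B ω t)
          = ∑ j ∈ Finset.Icc 1 (n+1),
              c j t • (uu V B ω j t • γ (j+1) + vv B ω j t • γ (j-1)) := by
        rw [Finset.mul_sum, Finset.sum_mul, ← Finset.sum_sub_distrib, Finset.smul_sum]
        refine Finset.sum_congr rfl fun j hj => ?_
        simp only [Finset.mem_Icc] at hj
        rw [mul_smul_comm, smul_mul_assoc, ← smul_sub, smul_comm,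
          keyComm γ hcliff B ω j (by simp only [Finset.mem_Icc]; omega) t]
      rw [hcm]
      simp only [smul_add, smul_smul, Finset.sum_add_distrib, add_smul]
      congr 1
      congr 1
      · -- E1 : up-shift
        rw [Icc_bot 1 (n+1+1) (by omega), Finset.sum_insert (by simp), sum_shift]
        have : ∀ x : ℝ, c (1-1) x = 0 := hc0
        simp only [show (1-1 : ℕ) = 0 from rfl, hc0, zero_mul, zero_smul, zero_add,
          Nat.add_sub_cancel]
      · -- E2 : down-shift
        have hvv1 : vv B ω 1 t = 0 := by simp [vv]
        rw [Icc_bot 1 (n+1) (by omega), Finset.sum_insert (by simp), hvv1]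
        simp only [mul_zero, zero_smul, zero_add]
        rw [sum_shift]
        simp only [Nat.add_sub_cancel]
        refine Finset.sum_subset (Finset.Icc_subset_Icc_right (by omega)) fun x hx hnx => ?_
        simp only [Finset.mem_Icc] at hx hnx
        have : c (x+1) = fun _ => 0 := hsupp _ (Or.inr (by omega))
        rw [this]
        simp
      · -- E3
        refine Finset.sum_subset (Finset.Icc_subset_Icc_right (by omega)) fun x hx hnx => ?_
        simp only [Finset.mem_Icc] at hx hnx
        have : c x = fun _ => 0 := hsupp _ (Or.inr (by omega))
        rw [this]
        simp
end main


/-- structure of the iterated adjoints of the jump operator of the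
boundary-dissipated Majorana chain. -/
theorem stmt8 {d V : ℕ} (hV : 1 ≤ V)
    (γ : ℕ → Matrix (Fin d) (Fin d) ℂ)
    (hherm : ∀ j ∈ Finset.Icc 1 (2 * V), (γ j).IsHermitian)
    (hcliff : ∀ j ∈ Finset.Icc 1 (2 * V), ∀ k ∈ Finset.Icc 1 (2 * V),
      γ j * γ k + γ k * γ j = if j = k then (2 : ℂ) • (1 : Matrix (Fin d) (Fin d) ℂ) else 0)
    (B ω κ : ℝ) (hB : 0 < B) (hω : 0 < ω) (hκ : 0 < κ)
    (n : ℕ) (hn : n ≤ 2 * V - 1) :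
    ∃ f : ℝ → ℝ, ∃ g : ℕ → ℝ → ℂ,
      (∀ j, ContDiff ℝ (⊤ : ℕ∞) (g j)) ∧
      (∀ m, n = 2 * m → ∀ t : ℝ,
        f t = 2 ^ (2 * m) * Real.sqrt κ * B ^ m * (Real.cos (ω * t)) ^ m) ∧
      (∀ m, n = 2 * m + 1 → ∀ t : ℝ,
        f t = 2 ^ (2 * m + 1) * Real.sqrt κ * B ^ (m + 1) * (Real.cos (ω * t)) ^ (m + 1)) ∧
      ∀ t : ℝ, adPow (majH V γ B ω) n (majL γ κ) t
        = ((f t : ℝ) : ℂ) • γ (n + 1) + ∑ j ∈ Finset.Icc 1 n, g j t • γ j := by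
  obtain ⟨c, hsm, hsupp, hlead, hrep⟩ := mainRep γ hcliff B ω κ n (by omega)
  refine ⟨fun t => 2 ^ n * Real.sqrt κ * (B * Real.cos (ω * t)) ^ ((n+1)/2), c, hsm, ?_, ?_, ?_⟩
  · intro m hm t
    subst hm
    rw [show (2*m+1)/2 = m by omega]
    simp only [mul_pow]
    ring
  · intro m hm t
    subst hm
    rw [show (2*m+1+1)/2 = m + 1 by omega]
    simp only [mul_pow]
    ring
  · intro t
    rw [hrep t, Finset.sum_Icc_succ_top (by omega : 1 ≤ n+1), hlead, add_comm]
    congr 1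
    simp only [Fco, bc]
    norm_cast
end

section
/- In the boundary-dissipated Majorana chain, for every integer n with 0 ≤ n ≤ 2V − 1, the smallest unital subalgebra of the d×d complex matrices containing {ad^m(L)(0) : m = 0, 1, …, n} contains γ_1, …, γ_{n+1}; equivalently, it equals the unital subalgebra generated by γ_1, …, γ_{n+1}. -/
open Matrix Filter
open scoped ComplexOrder

attribute [local instance] Matrix.normedAddCommGroup Matrix.normedSpace

/-! ### Auxiliary machinery for `stmt9` -/

section cliffAux
variable {d : ℕ} (γ : ℕ → Matrix (Fin d) (Fin d) ℂ) {N : ℕ}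
variable (hcliff : ∀ j ∈ Finset.Icc 1 N, ∀ k ∈ Finset.Icc 1 N,
      γ j * γ k + γ k * γ j = if j = k then (2 : ℂ) • (1 : Matrix (Fin d) (Fin d) ℂ) else 0)

include hcliff

lemma stmt9_sq_one {a : ℕ} (ha : a ∈ Finset.Icc 1 N) : γ a * γ a = 1 := by
  have h := hcliff a ha a ha
  rw [if_pos rfl, ← two_smul ℂ (γ a * γ a)] at h
  exact smul_right_injective _ (by norm_num : (2:ℂ) ≠ 0) h

lemma stmt9_anticomm {a b : ℕ} (ha : a ∈ Finset.Icc 1 N) (hb : b ∈ Finset.Icc 1 N)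
    (hab : a ≠ b) : γ b * γ a = -(γ a * γ b) := by
  have h := hcliff a ha b hb
  rw [if_neg hab, add_comm] at h
  exact eq_neg_of_add_eq_zero_left h

lemma stmt9_comm_pair {a b k : ℕ} (ha : a ∈ Finset.Icc 1 N) (hb : b ∈ Finset.Icc 1 N)
    (hk : k ∈ Finset.Icc 1 N) :
    γ a * γ b * γ k - γ k * (γ a * γ b) =
      (if k = b then (2:ℂ) else 0) • γ a - (if k = a then (2:ℂ) else 0) • γ b := by
  by_cases hka : k = a
  · subst hka
    by_cases hkb : k = b
    · subst hkb; simp [mul_assoc]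
    · rw [if_neg hkb, if_pos rfl]
      have h2 : γ k * γ k = 1 := stmt9_sq_one γ hcliff hk
      have hbk : γ b * γ k = -(γ k * γ b) := stmt9_anticomm γ hcliff hk hb hkb
      have e1 : γ k * γ b * γ k = -γ b := by
        rw [mul_assoc, hbk, mul_neg, ← mul_assoc, h2, one_mul]
      have e2 : γ k * (γ k * γ b) = γ b := by rw [← mul_assoc, h2, one_mul]
      rw [e1, e2]; module
  · by_cases hkb : k = b
    · subst hkb
      rw [if_pos rfl, if_neg hka]
      have h2 : γ k * γ k = 1 := stmt9_sq_one γ hcliff hk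
      have hak : γ a * γ k = -(γ k * γ a) := stmt9_anticomm γ hcliff hk ha hka
      have e1 : γ a * γ k * γ k = γ a := by rw [mul_assoc, h2, mul_one]
      have e2 : γ k * (γ a * γ k) = -γ a := by
        rw [hak, mul_neg, ← mul_assoc, h2, one_mul]
      rw [e1, e2]; module
    · rw [if_neg hka, if_neg hkb]
      have hbk : γ b * γ k = -(γ k * γ b) := stmt9_anticomm γ hcliff hk hb hkb
      have hak : γ a * γ k = -(γ k * γ a) := stmt9_anticomm γ hcliff hk ha hka
      have e1 : γ a * γ b * γ k = γ k * (γ a * γ b) := by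
        rw [mul_assoc, hbk, mul_neg, ← mul_assoc, hak, neg_mul, neg_neg, mul_assoc]
      rw [e1]; module
end cliffAux

noncomputable def stmt9_bf (B ω : ℝ) : ℝ → ℂ := fun t => ((B * Real.cos (ω * t) : ℝ) : ℂ)

noncomputable def stmt9_gmix (B ω : ℝ) (k l : ℕ) : ℝ → ℂ := fun t =>
  if l = k + 1 then (if k % 2 = 1 then 2 * stmt9_bf B ω t else 2)
  else if k = l + 1 then (if k % 2 = 1 then -2 else -(2 * stmt9_bf B ω t))
  else 0

noncomputable def stmt9_cf (V : ℕ) (B ω κ : ℝ) : ℕ → ℕ → ℝ → ℂ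
  | 0 => fun j _ => if j = 1 then ((Real.sqrt κ : ℝ) : ℂ) else 0
  | (m+1) => fun l t => deriv (stmt9_cf V B ω κ m l) t
      + ∑ j ∈ Finset.Icc 1 (2*V), stmt9_cf V B ω κ m j t * stmt9_gmix B ω j l t

lemma stmt9_bf_contDiff (B ω : ℝ) : ContDiff ℝ ((⊤:ℕ∞) : WithTop ℕ∞) (stmt9_bf B ω) :=
  Complex.ofRealCLM.contDiff.comp
    (contDiff_const.mul (Real.contDiff_cos.comp (contDiff_const.mul contDiff_id)))

lemma stmt9_gmix_contDiff (B ω : ℝ) (k l : ℕ) :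
    ContDiff ℝ ((⊤:ℕ∞) : WithTop ℕ∞) (stmt9_gmix B ω k l) := by
  by_cases h1 : l = k + 1
  · by_cases h2 : k % 2 = 1
    · rw [show stmt9_gmix B ω k l = fun t => 2 * stmt9_bf B ω t from
        funext fun t => by unfold stmt9_gmix; rw [if_pos h1, if_pos h2]]
      exact contDiff_const.mul (stmt9_bf_contDiff B ω)
    · rw [show stmt9_gmix B ω k l = fun _ => (2:ℂ) from
        funext fun t => by unfold stmt9_gmix; rw [if_pos h1, if_neg h2]]
      exact contDiff_const
  · by_cases h3 : k = l + 1
    · by_cases h2 : k % 2 = 1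
      · rw [show stmt9_gmix B ω k l = fun _ => (-2:ℂ) from
          funext fun t => by unfold stmt9_gmix; rw [if_neg h1, if_pos h3, if_pos h2]]
        exact contDiff_const
      · rw [show stmt9_gmix B ω k l = fun t => -(2 * stmt9_bf B ω t) from
          funext fun t => by unfold stmt9_gmix; rw [if_neg h1, if_pos h3, if_neg h2]]
        exact (contDiff_const.mul (stmt9_bf_contDiff B ω)).neg
    · rw [show stmt9_gmix B ω k l = fun _ => (0:ℂ) from
        funext fun t => by unfold stmt9_gmix; rw [if_neg h1, if_neg h3]]
      exact contDiff_const

lemma stmt9_cf_contDiff (V : ℕ) (B ω κ : ℝ) :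
    ∀ m j, ContDiff ℝ ((⊤:ℕ∞) : WithTop ℕ∞) (stmt9_cf V B ω κ m j) := by
  intro m
  induction m with
  | zero => intro j; exact contDiff_const
  | succ m ih =>
    intro l
    refine ContDiff.add ?_ ?_
    · exact (contDiff_infty_iff_deriv.mp (ih l)).2
    · exact ContDiff.sum fun j _ => (ih j).mul (stmt9_gmix_contDiff B ω j l)

lemma stmt9_cf_vanish (V : ℕ) (B ω κ : ℝ) :
    ∀ m j, m + 2 ≤ j → stmt9_cf V B ω κ m j = fun _ => 0 := by
  intro m
  induction m with
  | zero => intro j hj; funext t; simp [stmt9_cf]; omega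
  | succ m ih =>
    intro l hl
    funext t
    simp only [stmt9_cf]
    rw [ih l (by omega), deriv_const]
    rw [Finset.sum_eq_zero, add_zero]
    intro j hj
    by_cases hje : m + 2 ≤ j
    · rw [ih j hje]; simp
    · have : stmt9_gmix B ω j l t = 0 := by
        unfold stmt9_gmix
        rw [if_neg (by omega), if_neg (by omega)]
      rw [this, mul_zero]

lemma stmt9_cf_nonzero (V : ℕ) (B ω κ : ℝ) (hB : 0 < B) (hκ : 0 < κ) :
    ∀ m, m + 1 ≤ 2*V → stmt9_cf V B ω κ m (m+1) 0 ≠ 0 := by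
  intro m
  induction m with
  | zero =>
    intro _
    show (if 1 = 1 then ((Real.sqrt κ : ℝ) : ℂ) else 0) ≠ 0
    rw [if_pos rfl]
    exact_mod_cast Real.sqrt_ne_zero'.mpr hκ
  | succ m ih =>
    intro hm
    simp only [stmt9_cf]
    rw [stmt9_cf_vanish V B ω κ m (m+2) (by omega), deriv_const, zero_add]
    rw [Finset.sum_eq_single (m+1)]
    · have hg : stmt9_gmix B ω (m+1) (m+2) 0
          = if (m+1) % 2 = 1 then 2 * stmt9_bf B ω 0 else 2 := by
        unfold stmt9_gmix; rw [if_pos rfl]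
      have hbf0 : stmt9_bf B ω 0 = (B : ℂ) := by simp [stmt9_bf]
      rw [hg, hbf0]
      refine mul_ne_zero (ih (by omega)) ?_
      split_ifs
      · simp only [ne_eq, mul_eq_zero, not_or]
        exact ⟨two_ne_zero, by exact_mod_cast hB.ne'⟩
      · exact two_ne_zero
    · intro j hj hne
      by_cases hje : m + 2 ≤ j
      · rw [stmt9_cf_vanish V B ω κ m j hje]; simp
      · have : stmt9_gmix B ω j (m+2) 0 = 0 := by
          unfold stmt9_gmix
          rw [if_neg (by omega), if_neg (by omega)]
        rw [this, mul_zero]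
    · intro h
      exact absurd (Finset.mem_Icc.mpr (by omega)) h

section mainAux
variable {d V : ℕ} (γ : ℕ → Matrix (Fin d) (Fin d) ℂ)
variable (hcliff : ∀ j ∈ Finset.Icc 1 (2*V), ∀ k ∈ Finset.Icc 1 (2*V),
      γ j * γ k + γ k * γ j = if j = k then (2 : ℂ) • (1 : Matrix (Fin d) (Fin d) ℂ) else 0)

lemma stmt9_expand_aux (X Y G : Matrix (Fin d) (Fin d) ℂ) (b : ℂ) :
    Complex.I • (((Complex.I * b) • X + Complex.I • Y) * G
        - G * ((Complex.I * b) • X + Complex.I • Y))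
      = (-b) • (X * G - G * X) + (-1 : ℂ) • (Y * G - G * Y) := by
  simp only [add_mul, mul_add, smul_mul_assoc, mul_smul_comm, smul_sub, smul_add, smul_smul]
  rw [show Complex.I * (Complex.I * b) = -b by rw [← mul_assoc, Complex.I_mul_I]; ring,
    Complex.I_mul_I]
  module

include hcliff in
lemma stmt9_iH_comm (B ω : ℝ) {k : ℕ} (hk : k ∈ Finset.Icc 1 (2*V)) (t : ℝ) :
    Complex.I • (majH V γ B ω t * γ k - γ k * majH V γ B ω t)
      = ∑ l ∈ Finset.Icc 1 (2*V), stmt9_gmix B ω k l t • γ l := by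
  have hkk := Finset.mem_Icc.mp hk
  set b : ℂ := ((B * Real.cos (ω * t) : ℝ) : ℂ) with hb
  have hbf : stmt9_bf B ω t = b := rfl
  set P : Matrix (Fin d) (Fin d) ℂ := ∑ j ∈ Finset.Icc 1 V, γ (2 * j - 1) * γ (2 * j) with hP
  set Q : Matrix (Fin d) (Fin d) ℂ := ∑ j ∈ Finset.Icc 1 (V - 1), γ (2 * j) * γ (2 * j + 1) with hQ
  have hmaj : majH V γ B ω t = (Complex.I * b) • P + Complex.I • Q := rfl
  rw [hmaj, stmt9_expand_aux]
  have hPc : P * γ k - γ k * P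
      = ∑ j ∈ Finset.Icc 1 V,
          ((if k = 2*j then (2:ℂ) else 0) • γ (2*j-1) - (if k = 2*j-1 then (2:ℂ) else 0) • γ (2*j)) := by
    rw [hP, Finset.sum_mul, Finset.mul_sum, ← Finset.sum_sub_distrib]
    refine Finset.sum_congr rfl fun j hj => ?_
    have hj' := Finset.mem_Icc.mp hj
    exact stmt9_comm_pair γ hcliff (Finset.mem_Icc.mpr (by omega))
      (Finset.mem_Icc.mpr (by omega)) hk
  have hQc : Q * γ k - γ k * Q
      = ∑ j ∈ Finset.Icc 1 (V-1),
          ((if k = 2*j+1 then (2:ℂ) else 0) • γ (2*j) - (if k = 2*j then (2:ℂ) else 0) • γ (2*j+1)) := by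
    rw [hQ, Finset.sum_mul, Finset.mul_sum, ← Finset.sum_sub_distrib]
    refine Finset.sum_congr rfl fun j hj => ?_
    have hj' := Finset.mem_Icc.mp hj
    exact stmt9_comm_pair γ hcliff (Finset.mem_Icc.mpr (by omega))
      (Finset.mem_Icc.mpr (by omega)) hk
  rw [hPc, hQc]
  have hRHS : ∑ l ∈ Finset.Icc 1 (2*V), stmt9_gmix B ω k l t • γ l
      = (∑ l ∈ Finset.Icc 1 (2*V), (if l = k+1 then ((if k % 2 = 1 then 2*b else 2)) • γ l else 0))
      + (∑ l ∈ Finset.Icc 1 (2*V), (if l = k-1 then ((if k % 2 = 1 then (-2:ℂ) else -(2*b))) • γ l else 0)) := by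
    rw [← Finset.sum_add_distrib]
    refine Finset.sum_congr rfl fun l hl => ?_
    have hl' := Finset.mem_Icc.mp hl
    simp only [stmt9_gmix, hbf]
    by_cases h1 : l = k + 1
    · rw [if_pos h1, if_pos h1, if_neg (show ¬ l = k - 1 by omega), add_zero]
    · rw [if_neg h1, if_neg h1, zero_add]
      by_cases h2 : k = l + 1
      · rw [if_pos h2, if_pos (show l = k - 1 by omega)]
      · rw [if_neg h2, if_neg (show ¬ l = k - 1 by omega), zero_smul]
  rw [hRHS,
    Finset.sum_ite_eq' (Finset.Icc 1 (2*V)) (k+1) (fun l => (if k % 2 = 1 then 2*b else 2) • γ l),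
    Finset.sum_ite_eq' (Finset.Icc 1 (2*V)) (k-1) (fun l => (if k % 2 = 1 then (-2:ℂ) else -(2*b)) • γ l)]
  obtain ⟨p, hp | hp⟩ : ∃ p, k = 2*p+1 ∨ k = 2*p+2 := ⟨(k-1)/2, by omega⟩
  · subst hp
    have e1 : (∑ j ∈ Finset.Icc 1 V,
        ((if 2*p+1 = 2*j then (2:ℂ) else 0) • γ (2*j-1) - (if 2*p+1 = 2*j-1 then (2:ℂ) else 0) • γ (2*j)))
        = -(if p+1 ∈ Finset.Icc 1 V then (2:ℂ) • γ (2*(p+1)) else 0) := by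
      rw [← Finset.sum_ite_eq' (Finset.Icc 1 V) (p+1) (fun j => (2:ℂ) • γ (2*j)), ← Finset.sum_neg_distrib]
      refine Finset.sum_congr rfl fun j hj => ?_
      have hj' := Finset.mem_Icc.mp hj
      rw [if_neg (show ¬ 2*p+1 = 2*j by omega), zero_smul, zero_sub, ite_smul,
        if_congr (show 2*p+1 = 2*j-1 ↔ j = p+1 by omega) rfl rfl, zero_smul]
    have e2 : (∑ j ∈ Finset.Icc 1 (V-1),
        ((if 2*p+1 = 2*j+1 then (2:ℂ) else 0) • γ (2*j) - (if 2*p+1 = 2*j then (2:ℂ) else 0) • γ (2*j+1)))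
        = (if p ∈ Finset.Icc 1 (V-1) then (2:ℂ) • γ (2*p) else 0) := by
      rw [← Finset.sum_ite_eq' (Finset.Icc 1 (V-1)) p (fun j => (2:ℂ) • γ (2*j))]
      refine Finset.sum_congr rfl fun j hj => ?_
      have hj' := Finset.mem_Icc.mp hj
      rw [if_neg (show ¬ 2*p+1 = 2*j by omega), zero_smul, sub_zero, ite_smul,
        if_congr (show 2*p+1 = 2*j+1 ↔ j = p by omega) rfl rfl, zero_smul]
    rw [e1, e2, if_pos (show p+1 ∈ Finset.Icc 1 V from Finset.mem_Icc.mpr (by omega)),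
      if_pos (show 2*p+1+1 ∈ Finset.Icc 1 (2*V) from Finset.mem_Icc.mpr (by omega)),
      if_pos (show (2*p+1) % 2 = 1 by omega), if_pos (show (2*p+1) % 2 = 1 by omega)]
    have harg : 2*(p+1) = 2*p+1+1 := by ring
    rw [harg]
    by_cases hp1 : 1 ≤ p
    · rw [if_pos (Finset.mem_Icc.mpr (by omega)),
        if_pos (show 2*p+1-1 ∈ Finset.Icc 1 (2*V) from Finset.mem_Icc.mpr (by omega)),
        show 2*p+1-1 = 2*p by omega]
      module
    · rw [if_neg (by simp only [Finset.mem_Icc]; omega),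
        if_neg (show ¬ 2*p+1-1 ∈ Finset.Icc 1 (2*V) by simp only [Finset.mem_Icc]; omega)]
      module
  · subst hp
    have e1 : (∑ j ∈ Finset.Icc 1 V,
        ((if 2*p+2 = 2*j then (2:ℂ) else 0) • γ (2*j-1) - (if 2*p+2 = 2*j-1 then (2:ℂ) else 0) • γ (2*j)))
        = (if p+1 ∈ Finset.Icc 1 V then (2:ℂ) • γ (2*(p+1)-1) else 0) := by
      rw [← Finset.sum_ite_eq' (Finset.Icc 1 V) (p+1) (fun j => (2:ℂ) • γ (2*j-1))]
      refine Finset.sum_congr rfl fun j hj => ?_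
      have hj' := Finset.mem_Icc.mp hj
      rw [if_neg (show ¬ 2*p+2 = 2*j-1 by omega), zero_smul, sub_zero, ite_smul,
        if_congr (show 2*p+2 = 2*j ↔ j = p+1 by omega) rfl rfl, zero_smul]
    have e2 : (∑ j ∈ Finset.Icc 1 (V-1),
        ((if 2*p+2 = 2*j+1 then (2:ℂ) else 0) • γ (2*j) - (if 2*p+2 = 2*j then (2:ℂ) else 0) • γ (2*j+1)))
        = -(if p+1 ∈ Finset.Icc 1 (V-1) then (2:ℂ) • γ (2*(p+1)+1) else 0) := by
      rw [← Finset.sum_ite_eq' (Finset.Icc 1 (V-1)) (p+1) (fun j => (2:ℂ) • γ (2*j+1)), ← Finset.sum_neg_distrib]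
      refine Finset.sum_congr rfl fun j hj => ?_
      have hj' := Finset.mem_Icc.mp hj
      rw [if_neg (show ¬ 2*p+2 = 2*j+1 by omega), zero_smul, zero_sub, ite_smul,
        if_congr (show 2*p+2 = 2*j ↔ j = p+1 by omega) rfl rfl, zero_smul]
    rw [e1, e2, if_pos (show p+1 ∈ Finset.Icc 1 V from Finset.mem_Icc.mpr (by omega)),
      if_pos (show 2*p+2-1 ∈ Finset.Icc 1 (2*V) from Finset.mem_Icc.mpr (by omega)),
      if_neg (show ¬ (2*p+2) % 2 = 1 by omega), if_neg (show ¬ (2*p+2) % 2 = 1 by omega),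
      show 2*(p+1)-1 = 2*p+2-1 by omega]
    by_cases hq : p+2 ≤ V
    · rw [if_pos (Finset.mem_Icc.mpr (by omega)),
        if_pos (show 2*p+2+1 ∈ Finset.Icc 1 (2*V) from Finset.mem_Icc.mpr (by omega)),
        show 2*(p+1)+1 = 2*p+2+1 by omega]
      module
    · rw [if_neg (by simp only [Finset.mem_Icc]; omega),
        if_neg (show ¬ 2*p+2+1 ∈ Finset.Icc 1 (2*V) by simp only [Finset.mem_Icc]; omega)]
      module

include hcliff in
lemma stmt9_repr (hV : 1 ≤ V) (B ω κ : ℝ) :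
    ∀ m, adPow (majH V γ B ω) m (majL γ κ)
      = fun t => ∑ j ∈ Finset.Icc 1 (2*V), stmt9_cf V B ω κ m j t • γ j := by
  intro m
  induction m with
  | zero =>
    funext t
    show majL γ κ t = _
    unfold majL
    rw [show ∑ j ∈ Finset.Icc 1 (2*V), stmt9_cf V B ω κ 0 j t • γ j
        = ∑ j ∈ Finset.Icc 1 (2*V), (if j = 1 then ((Real.sqrt κ : ℝ):ℂ) • γ j else 0) from
      Finset.sum_congr rfl fun j hj => by
        show (if j = 1 then ((Real.sqrt κ : ℝ) : ℂ) else 0) • γ j = _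
        rw [ite_smul, zero_smul]]
    rw [Finset.sum_ite_eq' _ 1 (fun j => ((Real.sqrt κ:ℝ):ℂ) • γ j),
      if_pos (Finset.mem_Icc.mpr (by omega))]
  | succ m ih =>
    funext t
    show adOp (majH V γ B ω) (adPow (majH V γ B ω) m (majL γ κ)) t = _
    rw [ih]
    unfold adOp
    have hd : HasDerivAt (fun t => ∑ j ∈ Finset.Icc 1 (2*V), stmt9_cf V B ω κ m j t • γ j)
        (∑ j ∈ Finset.Icc 1 (2*V), deriv (stmt9_cf V B ω κ m j) t • γ j) t :=
      HasDerivAt.fun_sum fun j _ =>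
        HasDerivAt.smul_const
          (((stmt9_cf_contDiff V B ω κ m j).differentiable (by simp)).differentiableAt.hasDerivAt) (γ j)
    erw [hd.deriv]
    have hc : Complex.I • (majH V γ B ω t * (∑ j ∈ Finset.Icc 1 (2*V), stmt9_cf V B ω κ m j t • γ j)
          - (∑ j ∈ Finset.Icc 1 (2*V), stmt9_cf V B ω κ m j t • γ j) * majH V γ B ω t)
        = ∑ l ∈ Finset.Icc 1 (2*V),
            (∑ j ∈ Finset.Icc 1 (2*V), stmt9_cf V B ω κ m j t * stmt9_gmix B ω j l t) • γ l := by
      rw [Finset.mul_sum, Finset.sum_mul, ← Finset.sum_sub_distrib, Finset.smul_sum]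
      have step1 : ∀ j ∈ Finset.Icc 1 (2*V),
          Complex.I • (majH V γ B ω t * (stmt9_cf V B ω κ m j t • γ j)
            - (stmt9_cf V B ω κ m j t • γ j) * majH V γ B ω t)
          = stmt9_cf V B ω κ m j t • ∑ l ∈ Finset.Icc 1 (2*V), stmt9_gmix B ω j l t • γ l :=
        fun j hj => by
          rw [mul_smul_comm, smul_mul_assoc, ← smul_sub, smul_comm,
            stmt9_iH_comm γ hcliff B ω hj t]
      rw [Finset.sum_congr rfl step1]
      simp only [Finset.smul_sum, smul_smul]
      rw [Finset.sum_comm]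
      simp only [← Finset.sum_smul]
    rw [hc, ← Finset.sum_add_distrib]
    refine Finset.sum_congr rfl fun l hl => ?_
    show _ = stmt9_cf V B ω κ (m+1) l t • γ l
    simp only [stmt9_cf]
    rw [add_smul]
    exact add_comm _ _
end mainAux

/-- the unital algebra generated by the iterated adjoints of the jump
operator at `t = 0` up to order `n` contains `γ_1, …, γ_{n+1}`, and equals the unital
algebra generated by `γ_1, …, γ_{n+1}`. -/
theorem stmt9 {d V : ℕ} (hV : 1 ≤ V)
    (γ : ℕ → Matrix (Fin d) (Fin d) ℂ)
    (hherm : ∀ j ∈ Finset.Icc 1 (2 * V), (γ j).IsHermitian)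
    (hcliff : ∀ j ∈ Finset.Icc 1 (2 * V), ∀ k ∈ Finset.Icc 1 (2 * V),
      γ j * γ k + γ k * γ j = if j = k then (2 : ℂ) • (1 : Matrix (Fin d) (Fin d) ℂ) else 0)
    (B ω κ : ℝ) (hB : 0 < B) (hω : 0 < ω) (hκ : 0 < κ)
    (n : ℕ) (hn : n ≤ 2 * V - 1) :
    (∀ j ∈ Finset.Icc 1 (n + 1), γ j ∈ Algebra.adjoin ℂ
      {A : Matrix (Fin d) (Fin d) ℂ | ∃ m ≤ n, A = adPow (majH V γ B ω) m (majL γ κ) 0}) ∧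
    Algebra.adjoin ℂ
        {A : Matrix (Fin d) (Fin d) ℂ | ∃ m ≤ n, A = adPow (majH V γ B ω) m (majL γ κ) 0}
      = Algebra.adjoin ℂ (γ '' Set.Icc 1 (n + 1)) := by
  have hrep := stmt9_repr γ hcliff hV B ω κ
  have hrep0 : ∀ m, m ≤ n → adPow (majH V γ B ω) m (majL γ κ) 0
      = (∑ j ∈ Finset.Icc 1 m, stmt9_cf V B ω κ m j 0 • γ j)
        + stmt9_cf V B ω κ m (m+1) 0 • γ (m+1) := by
    intro m hm
    rw [congrFun (hrep m) 0]
    rw [← Finset.sum_subset (show Finset.Icc 1 (m+1) ⊆ Finset.Icc 1 (2*V) by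
        intro x hx; simp only [Finset.mem_Icc] at *; omega)
      (fun x hx hx2 => by
        rw [stmt9_cf_vanish V B ω κ m x (by simp only [Finset.mem_Icc] at hx hx2; omega)]
        simp)]
    rw [Finset.sum_Icc_succ_top (by omega : 1 ≤ m + 1)]
  have key : ∀ m, m ≤ n → γ (m+1) ∈ Algebra.adjoin ℂ
      {A : Matrix (Fin d) (Fin d) ℂ | ∃ m ≤ n, A = adPow (majH V γ B ω) m (majL γ κ) 0} := by
    intro m
    induction m using Nat.strong_induction_on with
    | _ m IH =>
      intro hm
      have hc := stmt9_cf_nonzero V B ω κ hB hκ m (by omega)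
      have h1 : adPow (majH V γ B ω) m (majL γ κ) 0 ∈ Algebra.adjoin ℂ
          {A : Matrix (Fin d) (Fin d) ℂ | ∃ m ≤ n, A = adPow (majH V γ B ω) m (majL γ κ) 0} :=
        Algebra.subset_adjoin ⟨m, hm, rfl⟩
      have h2 : (∑ j ∈ Finset.Icc 1 m, stmt9_cf V B ω κ m j 0 • γ j) ∈ Algebra.adjoin ℂ
          {A : Matrix (Fin d) (Fin d) ℂ | ∃ m ≤ n, A = adPow (majH V γ B ω) m (majL γ κ) 0} := by
        refine Subalgebra.sum_mem _ fun j hj => Subalgebra.smul_mem _ ?_ _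
        have hj' := Finset.mem_Icc.mp hj
        have := IH (j-1) (by omega) (by omega)
        rwa [show j - 1 + 1 = j by omega] at this
      have heq : γ (m+1) = (stmt9_cf V B ω κ m (m+1) 0)⁻¹ •
          (adPow (majH V γ B ω) m (majL γ κ) 0
            - ∑ j ∈ Finset.Icc 1 m, stmt9_cf V B ω κ m j 0 • γ j) := by
        rw [hrep0 m hm, add_sub_cancel_left, inv_smul_smul₀ hc]
      rw [heq]
      exact Subalgebra.smul_mem _ (Subalgebra.sub_mem _ h1 h2) _
  constructor
  · intro j hj
    have hj' := Finset.mem_Icc.mp hj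
    have := key (j-1) (by omega)
    rwa [show j - 1 + 1 = j by omega] at this
  · apply le_antisymm
    · apply Algebra.adjoin_le
      rintro A ⟨m, hm, rfl⟩
      rw [hrep0 m hm]
      refine Subalgebra.add_mem _ (Subalgebra.sum_mem _ fun j hj => Subalgebra.smul_mem _ ?_ _)
        (Subalgebra.smul_mem _ ?_ _)
      · have hj' := Finset.mem_Icc.mp hj
        exact Algebra.subset_adjoin ⟨j, ⟨hj'.1, by omega⟩, rfl⟩
      · exact Algebra.subset_adjoin ⟨m+1, ⟨by omega, by omega⟩, rfl⟩
    · apply Algebra.adjoin_le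
      rintro A ⟨j, hj, rfl⟩
      have hj1 := hj.1
      have hj2 := hj.2
      have := key (j-1) (by omega)
      rwa [show j - 1 + 1 = j by omega] at this
end

section
/- Let L_t be a time-dependent GKSL generator with Hermitian jump operators and let X_t be any differentiable family of d×d complex matrices (not necessarily Hermitian) with ∂_t X_t = L_t(X_t) for all t ≥ 0. Then d/dt ‖X_t‖₂² = − Σ_{m=1}^M ‖[L_{m,t}, X_t]‖₂² ≤ 0; in particular, t ↦ ‖X_t‖₂ is non-increasing on [0, ∞), so the GKSL propagator is a contraction in Hilbert–Schmidt norm: ‖X_t‖₂ ≤ ‖X_s‖₂ for all 0 ≤ s ≤ t. -/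
open Matrix Filter
open scoped ComplexOrder

attribute [local instance] Matrix.normedAddCommGroup Matrix.normedSpace

lemma hsNormSq_eq_sum {d : ℕ} (A : Matrix (Fin d) (Fin d) ℂ) :
    hsNormSq A = ∑ j, ∑ i, Complex.normSq (A i j) := by
  simp only [hsNormSq, Matrix.trace, Matrix.diag, Matrix.mul_apply, conjTranspose_apply,
    Complex.re_sum]
  congr 1; ext j; congr 1; ext i
  simp [Complex.mul_re, Complex.normSq_apply]

lemma hsNormSq_nonneg {d : ℕ} (A : Matrix (Fin d) (Fin d) ℂ) : 0 ≤ hsNormSq A := by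
  rw [hsNormSq_eq_sum]
  exact Finset.sum_nonneg fun j _ => Finset.sum_nonneg fun i _ => Complex.normSq_nonneg _

lemma trace_diss {d : ℕ} (A Y : Matrix (Fin d) (Fin d) ℂ) (hA : Aᴴ = A) :
    trace (Yᴴ * (A*Y*A - (2⁻¹:ℂ)•(A^2*Y + Y*A^2))) +
    trace ((A*Y*A - (2⁻¹:ℂ)•(A^2*Y + Y*A^2))ᴴ * Y)
    = -trace ((A*Y - Y*A)ᴴ * (A*Y - Y*A)) := by
  have c1 : trace (A * (Yᴴ * (A * Y))) = trace (Yᴴ * (A * (Y * A))) := by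
    rw [Matrix.trace_mul_comm]; simp [mul_assoc]
  have c2 : trace (A * (Yᴴ * (Y * A))) = trace (Yᴴ * (Y * (A * A))) := by
    rw [Matrix.trace_mul_comm]; simp [mul_assoc]
  have c3 : trace (A * (A * (Yᴴ * Y))) = trace (Yᴴ * (Y * (A * A))) := by
    rw [Matrix.trace_mul_comm]; simp only [mul_assoc]; exact c2
  simp only [conjTranspose_sub, conjTranspose_smul, conjTranspose_add, conjTranspose_mul, hA,
    Complex.star_def, map_inv₀, Complex.conj_ofNat, pow_two, mul_sub, sub_mul, mul_add, add_mul,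
    smul_mul_assoc, mul_smul_comm, trace_sub, trace_add, trace_smul, mul_assoc, smul_eq_mul]
  linear_combination c2 - (2⁻¹:ℂ) * c3

lemma trace_ham {d : ℕ} (B Y : Matrix (Fin d) (Fin d) ℂ) (hB : Bᴴ = B) :
    trace (Yᴴ * ((-Complex.I)•(B*Y - Y*B))) +
    trace (((-Complex.I)•(B*Y - Y*B))ᴴ * Y) = 0 := by
  have c1 : trace (B * (Yᴴ * Y)) = trace (Yᴴ * (Y * B)) := by
    rw [Matrix.trace_mul_comm]; simp [mul_assoc]
  simp only [conjTranspose_smul, conjTranspose_sub, conjTranspose_mul, hB, star_neg,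
    Complex.star_def, Complex.conj_I, mul_sub, sub_mul, smul_mul_assoc, mul_smul_comm,
    trace_sub, trace_smul, mul_assoc, smul_eq_mul, neg_smul, neg_mul, mul_neg, trace_neg,
    conjTranspose_neg, neg_sub]
  linear_combination -Complex.I * c1

lemma key_trace {d M : ℕ} (H0 : Matrix (Fin d) (Fin d) ℂ)
    (L0 : Fin M → Matrix (Fin d) (Fin d) ℂ) (Y : Matrix (Fin d) (Fin d) ℂ)
    (hH : H0ᴴ = H0) (hL : ∀ m, (L0 m)ᴴ = L0 m) :
    (trace (Yᴴ * ((-Complex.I) • (H0 * Y - Y * H0) +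
        ∑ m : Fin M, (L0 m * Y * L0 m - (2⁻¹ : ℂ) • ((L0 m) ^ 2 * Y + Y * (L0 m) ^ 2)))) +
     trace (((-Complex.I) • (H0 * Y - Y * H0) +
        ∑ m : Fin M, (L0 m * Y * L0 m - (2⁻¹ : ℂ) • ((L0 m) ^ 2 * Y + Y * (L0 m) ^ 2)))ᴴ * Y))
    = -∑ m : Fin M, trace ((L0 m * Y - Y * L0 m)ᴴ * (L0 m * Y - Y * L0 m)) := by
  rw [show ∀ P Q : Matrix (Fin d) (Fin d) ℂ,
      trace (Yᴴ * (P + Q)) + trace ((P + Q)ᴴ * Y)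
      = (trace (Yᴴ * P) + trace (Pᴴ * Y)) + (trace (Yᴴ * Q) + trace (Qᴴ * Y)) from by
    intro P Q; simp only [mul_add, conjTranspose_add, add_mul, trace_add]; ring]
  rw [trace_ham H0 Y hH]
  rw [zero_add, Matrix.mul_sum, conjTranspose_sum, Finset.sum_mul, trace_sum, trace_sum,
    ← Finset.sum_add_distrib, ← Finset.sum_neg_distrib]
  exact Finset.sum_congr rfl fun m _ => trace_diss (L0 m) Y (hL m)

lemma hs_deriv {d : ℕ}
    (X : ℝ → Matrix (Fin d) (Fin d) ℂ) (t : ℝ)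
    (G : Matrix (Fin d) (Fin d) ℂ)
    (hX : HasDerivAt X G t) :
    HasDerivAt (fun τ => hsNormSq (X τ))
      ((trace ((X t)ᴴ * G) + trace (Gᴴ * (X t))).re) t := by
  have h1 : HasDerivAt (fun τ => ∑ j : Fin d, ∑ i : Fin d, Complex.normSq (X τ i j))
      (∑ j : Fin d, ∑ i : Fin d,
        (2 * (X t i j).re * (G i j).re + 2 * (X t i j).im * (G i j).im)) t := by
    apply HasDerivAt.fun_sum; intro j _
    apply HasDerivAt.fun_sum; intro i _
    have hx : HasDerivAt (fun τ => X τ i j) (G i j) t :=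
      hasDerivAt_pi.1 (hasDerivAt_pi.1 hX i) j
    have hre : HasDerivAt (fun τ => (X τ i j).re) ((G i j).re) t :=
      Complex.reCLM.hasFDerivAt.comp_hasDerivAt t hx
    have him : HasDerivAt (fun τ => (X τ i j).im) ((G i j).im) t :=
      Complex.imCLM.hasFDerivAt.comp_hasDerivAt t hx
    have := (hre.mul hre).add (him.mul him)
    simp only [Complex.normSq_apply]
    convert this using 1
    · funext τ; simp only [Pi.add_apply, Pi.mul_apply, Pi.pow_apply]
    ring
  have heq : (fun τ => hsNormSq (X τ))
      = fun τ => ∑ j : Fin d, ∑ i : Fin d, Complex.normSq (X τ i j) := by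
    funext τ; exact hsNormSq_eq_sum _
  rw [heq]
  convert h1 using 1
  have hz : trace (Gᴴ * (X t)) = star (trace ((X t)ᴴ * G)) := by
    rw [← trace_conjTranspose, conjTranspose_mul, conjTranspose_conjTranspose]
  rw [hz]
  have h2 : (trace ((X t)ᴴ * G) + star (trace ((X t)ᴴ * G))).re
      = 2 * (trace ((X t)ᴴ * G)).re := by
    simp [Complex.add_re]; ring
  rw [h2]
  simp only [Matrix.trace, Matrix.diag, Matrix.mul_apply, conjTranspose_apply, Complex.re_sum,
    Finset.mul_sum]
  refine Finset.sum_congr rfl fun j _ => Finset.sum_congr rfl fun i _ => ?_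
  simp [Complex.mul_re]
  ring

/-- the squared Hilbert–Schmidt norm of any solution of the GKSL equation
with Hermitian jump operators is non-increasing; the propagator is a HS-contraction. -/
theorem stmt11 {d M : ℕ} (hd : 0 < d)
    (H : ℝ → Matrix (Fin d) (Fin d) ℂ)
    (L : Fin M → ℝ → Matrix (Fin d) (Fin d) ℂ)
    (hH : ∀ t : ℝ, 0 ≤ t → (H t).IsHermitian)
    (hL : ∀ m, ∀ t : ℝ, 0 ≤ t → (L m t).IsHermitian)
    (X : ℝ → Matrix (Fin d) (Fin d) ℂ)
    (hX : ∀ t : ℝ, 0 ≤ t → HasDerivAt X (gksl H L t (X t)) t) :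
    (∀ t : ℝ, 0 ≤ t →
      HasDerivAt (fun τ => hsNormSq (X τ)) (-(∑ m : Fin M, hsNormSq (L m t * X t - X t * L m t))) t ∧
      (-(∑ m : Fin M, hsNormSq (L m t * X t - X t * L m t))) ≤ 0) ∧
    ∀ s t : ℝ, 0 ≤ s → s ≤ t → hsNorm (X t) ≤ hsNorm (X s) := by
  have hderiv : ∀ t : ℝ, 0 ≤ t →
      HasDerivAt (fun τ => hsNormSq (X τ))
        (-(∑ m : Fin M, hsNormSq (L m t * X t - X t * L m t))) t := by
    intro t ht
    have hd := hs_deriv X t (gksl H L t (X t)) (hX t ht)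
    have hk := key_trace (H t) (fun m => L m t) (X t) (hH t ht) (fun m => hL m t ht)
    have hval : (trace ((X t)ᴴ * (gksl H L t (X t))) + trace ((gksl H L t (X t))ᴴ * (X t))).re
        = -(∑ m : Fin M, hsNormSq (L m t * X t - X t * L m t)) := by
      rw [show gksl H L t (X t) = (-Complex.I) • (H t * X t - X t * H t) +
          ∑ m : Fin M, (L m t * X t * L m t -
            (2⁻¹ : ℂ) • ((L m t) ^ 2 * X t + X t * (L m t) ^ 2)) from rfl]
      rw [hk]
      simp [hsNormSq, Complex.re_sum]
    rw [← hval]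
    exact hd
  refine ⟨fun t ht => ⟨hderiv t ht, ?_⟩, ?_⟩
  · exact neg_nonpos.2 (Finset.sum_nonneg fun m _ => hsNormSq_nonneg _)
  · intro s t hs hst
    have hanti : AntitoneOn (fun τ => hsNormSq (X τ)) (Set.Ici (0:ℝ)) := by
      apply antitoneOn_of_deriv_nonpos (convex_Ici 0)
      · intro τ hτ
        exact (hderiv τ hτ).continuousAt.continuousWithinAt
      · rw [interior_Ici]
        intro τ hτ
        exact (hderiv τ (le_of_lt hτ)).differentiableAt.differentiableWithinAt
      · rw [interior_Ici]
        intro τ hτ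
        rw [(hderiv τ (le_of_lt hτ)).deriv]
        exact neg_nonpos.2 (Finset.sum_nonneg fun m _ => hsNormSq_nonneg _)
    have hle : hsNormSq (X t) ≤ hsNormSq (X s) :=
      hanti (Set.mem_Ici.2 hs) (Set.mem_Ici.2 (hs.trans hst)) hst
    exact Real.sqrt_le_sqrt hle
end

section
/- Let E be a complex normed space, let K ≥ 1, let λ_1, …, λ_K ∈ ℝ and v_1, …, v_K ∈ E, and define f : ℝ → E by f(t) = Σ_{k=1}^K e^{i λ_k t} v_k. Then f is continuous, ‖f(t)‖ ≤ Σ_{k=1}^K ‖v_k‖ for all t, and for every ε > 0, δ > 0 and t0 ≥ 0 there exists a strictly increasing sequence (t_n)_{n≥1} of nonnegative reals with t_1 > t_0 + δ and t_{n+1} > t_n + δ for all n (so the intervals [t_n, t_n + δ] are mutually disjoint and disjoint from [t_0, t_0 + δ]), such that ‖f(t_n + t) − f(t_0 + t)‖ < ε for all n ≥ 1 and all t ∈ [0, δ]. -/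
open Filter

lemma norm_expI (l x : ℝ) : ‖Complex.exp (Complex.I * (l:ℂ) * (x:ℂ))‖ = 1 := by
  have h : Complex.I * (l:ℂ) * (x:ℂ) = ((l*x : ℝ):ℂ) * Complex.I := by push_cast; ring
  rw [h, Complex.norm_exp_ofReal_mul_I]

lemma abs_expI (l x : ℝ) : ‖Complex.exp (Complex.I * (l:ℂ) * (x:ℂ))‖ = 1 := by
  exact norm_expI l x

lemma exp_shift (l a b : ℝ) :
    Complex.exp (Complex.I * (l:ℂ) * ((a + b : ℝ):ℂ)) =
      Complex.exp (Complex.I * (l:ℂ) * (a:ℂ)) * Complex.exp (Complex.I * (l:ℂ) * (b:ℂ)) := by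
  rw [← Complex.exp_add]
  congr 1
  push_cast
  ring

lemma key {K : ℕ} (lam : Fin K → ℝ) {η : ℝ} (hη : 0 < η) (T : ℝ) :
    ∃ τ : ℝ, T ≤ τ ∧ ∀ k, ‖Complex.exp (Complex.I * (lam k : ℂ) * (τ:ℂ)) - 1‖ < η := by
  set T' := max T 1 with hT'def
  have hT'1 : (1:ℝ) ≤ T' := le_max_right _ _
  have hT'T : T ≤ T' := le_max_left _ _
  have hT'pos : (0:ℝ) < T' := lt_of_lt_of_le one_pos hT'1
  set u : ℕ → (Fin K → ℂ) := fun n k =>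
    Complex.exp (Complex.I * (lam k : ℂ) * (((n : ℝ) * T' : ℝ):ℂ)) with hu
  have hmem : ∀ n, u n ∈ Metric.closedBall (0 : Fin K → ℂ) 1 := by
    intro n
    rw [Metric.mem_closedBall, dist_zero_right]
    refine (pi_norm_le_iff_of_nonneg zero_le_one).mpr fun k => ?_
    rw [hu]
    simp only
    have h := abs_expI (lam k) ((n:ℝ)*T')
    push_cast at h ⊢
    rw [h]
  obtain ⟨a, -, φ, hφ, hconv⟩ :=
    (isCompact_closedBall (0 : Fin K → ℂ) 1).tendsto_subseq hmem
  have hcauchy : CauchySeq (u ∘ φ) := hconv.cauchySeq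
  obtain ⟨N, hN⟩ := Metric.cauchySeq_iff.mp hcauchy η hη
  have hlt : φ N < φ (N + 1) := hφ (Nat.lt_succ_self N)
  set p := φ (N + 1) - φ N with hp
  have hp1 : 1 ≤ p := Nat.le_sub_of_add_le (by omega)
  refine ⟨(p : ℝ) * T', ?_, ?_⟩
  · calc T ≤ T' := hT'T
    _ = 1 * T' := (one_mul T').symm
    _ ≤ (p : ℝ) * T' := by
        apply mul_le_mul_of_nonneg_right _ hT'pos.le
        exact_mod_cast hp1
  · intro k
    have hsplit : (φ (N+1) : ℝ) * T' = (φ N : ℝ) * T' + (p : ℝ) * T' := by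
      rw [hp]
      push_cast [Nat.cast_sub hlt.le]
      ring
    have h1 : u (φ (N+1)) k = u (φ N) k *
        Complex.exp (Complex.I * (lam k : ℂ) * (((p:ℝ) * T' : ℝ):ℂ)) := by
      rw [hu]
      simp only
      rw [hsplit, exp_shift]
    have h2 : ‖Complex.exp (Complex.I * (lam k : ℂ) * (((p:ℝ) * T' : ℝ):ℂ)) - 1‖
        = ‖u (φ (N+1)) k - u (φ N) k‖ := by
      rw [h1]
      rw [show u (φ N) k * Complex.exp (Complex.I * (lam k : ℂ) * (((p:ℝ) * T' : ℝ):ℂ)) - u (φ N) k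
          = u (φ N) k * (Complex.exp (Complex.I * (lam k : ℂ) * (((p:ℝ) * T' : ℝ):ℂ)) - 1) by ring]
      rw [norm_mul]
      have h5 : ‖u (φ N) k‖ = 1 := by
        rw [hu]
        simp only
        have h := abs_expI (lam k) ((φ N : ℝ)*T')
        push_cast at h ⊢
        rw [h]
      rw [h5, one_mul]
    have h3 : ‖u (φ (N+1)) k - u (φ N) k‖ ≤ dist (u (φ (N+1))) (u (φ N)) := by
      rw [← dist_eq_norm]
      exact dist_le_pi_dist _ _ k
    have h4 : dist (u (φ (N+1))) (u (φ N)) < η := hN (N+1) (Nat.le_succ N) N le_rfl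
    push_cast at h2 ⊢
    calc ‖Complex.exp (Complex.I * (lam k : ℂ) * ((p:ℝ) * T' : ℂ)) - 1‖
        = ‖u (φ (N+1)) k - u (φ N) k‖ := h2
      _ ≤ _ := h3
      _ < η := h4

/-- a vector-valued trigonometric polynomial with real frequencies is
continuous, bounded, and quasiperiodic in the sense of Condition Q. -/
theorem stmt12 {E : Type*} [NormedAddCommGroup E] [NormedSpace ℂ E]
    {K : ℕ} (hK : 1 ≤ K) (lam : Fin K → ℝ) (v : Fin K → E)
    (f : ℝ → E)
    (hf : ∀ t : ℝ, f t = ∑ k : Fin K, Complex.exp (Complex.I * (lam k : ℂ) * (t : ℂ)) • v k) :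
    Continuous f ∧
    (∀ t : ℝ, ‖f t‖ ≤ ∑ k : Fin K, ‖v k‖) ∧
    ∀ ε > (0 : ℝ), ∀ δ > (0 : ℝ), ∀ t0 : ℝ, 0 ≤ t0 →
      ∃ ts : ℕ → ℝ, (∀ n, 0 ≤ ts n) ∧ t0 + δ < ts 0 ∧ (∀ n, ts n + δ < ts (n + 1)) ∧
        ∀ n, ∀ t ∈ Set.Icc (0 : ℝ) δ, ‖f (ts n + t) - f (t0 + t)‖ < ε := by
  have hfun : f = fun t : ℝ =>
      ∑ k : Fin K, Complex.exp (Complex.I * (lam k : ℂ) * (t : ℂ)) • v k := funext hf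
  refine ⟨?_, ?_, ?_⟩
  · rw [hfun]
    refine continuous_finset_sum _ fun k _ => ?_
    exact (Complex.continuous_exp.comp (by continuity)).smul continuous_const
  · intro t
    rw [hf]
    refine le_trans (norm_sum_le _ _) (Finset.sum_le_sum fun k _ => ?_)
    rw [norm_smul, norm_expI, one_mul]
  · intro ε hε δ hδ t0 ht0
    set S := ∑ k : Fin K, ‖v k‖ with hSdef
    have hS : 0 ≤ S := Finset.sum_nonneg fun k _ => norm_nonneg _
    set η := ε / (S + 1) with hηdef
    have hη : 0 < η := div_pos hε (by linarith)
    have hkey : ∀ T : ℝ, ∃ τ : ℝ, T ≤ τ ∧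
        ∀ k, ‖Complex.exp (Complex.I * (lam k : ℂ) * (τ:ℂ)) - 1‖ < η :=
      fun T => key lam hη T
    choose g hg1 hg2 using hkey
    -- main estimate
    have hest : ∀ (x τ : ℝ),
        (∀ k, ‖Complex.exp (Complex.I * (lam k : ℂ) * (τ:ℂ)) - 1‖ < η) →
        ‖f (x + τ) - f x‖ < ε := by
      intro x τ hτ
      rw [hf, hf, ← Finset.sum_sub_distrib]
      have hterm : ∀ k : Fin K,
          ‖Complex.exp (Complex.I * (lam k : ℂ) * ((x + τ : ℝ):ℂ)) • v k -
            Complex.exp (Complex.I * (lam k : ℂ) * (x:ℂ)) • v k‖ ≤ η * ‖v k‖ := by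
        intro k
        rw [← sub_smul, exp_shift]
        rw [show Complex.exp (Complex.I * (lam k : ℂ) * (x:ℂ)) *
              Complex.exp (Complex.I * (lam k : ℂ) * (τ:ℂ)) -
              Complex.exp (Complex.I * (lam k : ℂ) * (x:ℂ))
            = Complex.exp (Complex.I * (lam k : ℂ) * (x:ℂ)) *
              (Complex.exp (Complex.I * (lam k : ℂ) * (τ:ℂ)) - 1) by ring]
        rw [norm_smul, norm_mul, norm_expI, one_mul]
        exact mul_le_mul_of_nonneg_right (hτ k).le (norm_nonneg _)
      calc ‖∑ k : Fin K, (Complex.exp (Complex.I * (lam k : ℂ) * ((x + τ : ℝ):ℂ)) • v k -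
              Complex.exp (Complex.I * (lam k : ℂ) * (x:ℂ)) • v k)‖
          ≤ ∑ k : Fin K, η * ‖v k‖ :=
            le_trans (norm_sum_le _ _) (Finset.sum_le_sum fun k _ => hterm k)
        _ = η * S := by rw [hSdef, Finset.mul_sum]
        _ < η * (S + 1) := by nlinarith
        _ = ε := by rw [hηdef]; field_simp
    -- recursive sequence
    let σ : ℕ → ℝ := fun n => Nat.rec (g (δ + 1)) (fun _ s => g (s + δ + 1)) n
    have hσ0 : σ 0 = g (δ + 1) := rfl
    have hσs : ∀ n, σ (n + 1) = g (σ n + δ + 1) := fun n => rfl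
    have hσlb : ∀ n, δ + 1 ≤ σ n := by
      intro n
      induction n with
      | zero => rw [hσ0]; exact hg1 _
      | succ n ih =>
        rw [hσs]
        have := hg1 (σ n + δ + 1)
        linarith
    have hσspec : ∀ n, ∀ k,
        ‖Complex.exp (Complex.I * (lam k : ℂ) * (Complex.ofReal (σ n))) - 1‖ < η := by
      intro n
      cases n with
      | zero => rw [hσ0]; exact hg2 _
      | succ n => rw [hσs]; exact hg2 _
    refine ⟨fun n => t0 + σ n, ?_, ?_, ?_, ?_⟩
    · intro n
      show 0 ≤ t0 + σ n
      have := hσlb n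
      linarith
    · show t0 + δ < t0 + σ 0
      have := hσlb 0
      linarith
    · intro n
      show t0 + σ n + δ < t0 + σ (n + 1)
      rw [hσs]
      have := hg1 (σ n + δ + 1)
      linarith
    · intro n t ht
      have h := hest (t0 + t) (σ n) (hσspec n)
      rw [show t0 + σ n + t = t0 + t + σ n by ring]
      exact h
end

section
/- Consider the time-dependent GKSL equation on 2×2 complex matrices with H_t = 0 and jump operators L_{1,t} = e^{−t} σx, L_{2,t} = e^{−t} σy. For any real constants c_x, c_y, c_z, the family ρ_t = I/2 + c_x e^{e^{−2t} − 1} σx + c_y e^{e^{−2t} − 1} σy + c_z e^{2(e^{−2t} − 1)} σz solves the GKSL equation with initial condition ρ_0 = I/2 + c_x σx + c_y σy + c_z σz, and lim_{t→∞} ρ_t = I/2 + e^{−1} c_x σx + e^{−1} c_y σy + e^{−2} c_z σz. In particular, the limit depends on the initial state, so the steady state is not unique. -/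
open Matrix Filter
open scoped ComplexOrder

attribute [local instance] Matrix.normedAddCommGroup Matrix.normedSpace

noncomputable def σx : Matrix (Fin 2) (Fin 2) ℂ := !![0, 1; 1, 0]
noncomputable def σy : Matrix (Fin 2) (Fin 2) ℂ := !![0, -Complex.I; Complex.I, 0]
noncomputable def σz : Matrix (Fin 2) (Fin 2) ℂ := !![1, 0; 0, -1]

lemma hxx' : σx * σx = 1 := by ext i j; fin_cases i <;> fin_cases j <;> simp [σx, Matrix.mul_apply, Fin.sum_univ_two, Matrix.one_apply]
lemma hyy' : σy * σy = 1 := by ext i j; fin_cases i <;> fin_cases j <;> simp [σy, Matrix.mul_apply, Fin.sum_univ_two, Matrix.one_apply]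
lemma hxy' : σx * σy = Complex.I • σz := by ext i j; fin_cases i <;> fin_cases j <;> simp [σx, σy, σz, Matrix.mul_apply, Fin.sum_univ_two]
lemma hyx' : σy * σx = -(Complex.I • σz) := by ext i j; fin_cases i <;> fin_cases j <;> simp [σx, σy, σz, Matrix.mul_apply, Fin.sum_univ_two]
lemma hxz' : σx * σz = -(Complex.I • σy) := by ext i j; fin_cases i <;> fin_cases j <;> simp [σx, σy, σz, Matrix.mul_apply, Fin.sum_univ_two]
lemma hzx' : σz * σx = Complex.I • σy := by ext i j; fin_cases i <;> fin_cases j <;> simp [σx, σy, σz, Matrix.mul_apply, Fin.sum_univ_two]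
lemma hyz' : σy * σz = Complex.I • σx := by ext i j; fin_cases i <;> fin_cases j <;> simp [σx, σy, σz, Matrix.mul_apply, Fin.sum_univ_two]
lemma hzy' : σz * σy = -(Complex.I • σx) := by ext i j; fin_cases i <;> fin_cases j <;> simp [σx, σy, σz, Matrix.mul_apply, Fin.sum_univ_two]

lemma gksl_eval (a b c : ℝ) (t : ℝ) :
    gksl (fun _ => (0 : Matrix (Fin 2) (Fin 2) ℂ))
      ![fun t => ((Real.exp (-t) : ℝ) : ℂ) • σx,
        fun t => ((Real.exp (-t) : ℝ) : ℂ) • σy] t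
      ((2⁻¹ : ℂ) • 1 + (a:ℂ) • σx + (b:ℂ) • σy + (c:ℂ) • σz)
    = ((a * (-2 * (Real.exp (-t) * Real.exp (-t))) : ℝ) : ℂ) • σx
      + ((b * (-2 * (Real.exp (-t) * Real.exp (-t))) : ℝ) : ℂ) • σy
      + ((c * (-4 * (Real.exp (-t) * Real.exp (-t))) : ℝ) : ℂ) • σz := by
  simp only [gksl, Fin.sum_univ_two, Matrix.cons_val_zero, Matrix.cons_val_one, Matrix.head_cons,
    mul_zero, zero_mul, sub_zero, zero_sub, smul_neg, neg_zero, smul_zero, zero_add]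
  simp only [smul_mul_assoc, mul_smul_comm, smul_pow, mul_add, add_mul, smul_add, smul_smul,
    hxx', hyy', hxy', hyx', hxz', hzx', hyz', hzy', mul_one, one_mul, one_pow, sq, smul_neg,
    neg_smul, neg_neg, Complex.I_mul_I, mul_neg, neg_mul]
  match_scalars <;> ring_nf <;> simp only [Complex.I_sq] <;> push_cast <;> ring


/-- exponentially decaying dephasing — explicit solution and its
initial-state-dependent limit. -/
theorem stmt13 (cx cy cz : ℝ)
    (ρ : ℝ → Matrix (Fin 2) (Fin 2) ℂ)
    (hρ : ∀ t : ℝ, ρ t = (2⁻¹ : ℂ) • 1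
      + ((cx * Real.exp (Real.exp (-2 * t) - 1) : ℝ) : ℂ) • σx
      + ((cy * Real.exp (Real.exp (-2 * t) - 1) : ℝ) : ℂ) • σy
      + ((cz * Real.exp (2 * (Real.exp (-2 * t) - 1)) : ℝ) : ℂ) • σz) :
    ρ 0 = (2⁻¹ : ℂ) • 1 + (cx : ℂ) • σx + (cy : ℂ) • σy + (cz : ℂ) • σz ∧
    (∀ t : ℝ, 0 ≤ t → HasDerivAt ρ
      (gksl (fun _ => (0 : Matrix (Fin 2) (Fin 2) ℂ))
        ![fun t => ((Real.exp (-t) : ℝ) : ℂ) • σx,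
          fun t => ((Real.exp (-t) : ℝ) : ℂ) • σy] t (ρ t)) t) ∧
    Tendsto ρ atTop (nhds ((2⁻¹ : ℂ) • 1
      + ((Real.exp (-1) * cx : ℝ) : ℂ) • σx
      + ((Real.exp (-1) * cy : ℝ) : ℂ) • σy
      + ((Real.exp (-2) * cz : ℝ) : ℂ) • σz)) := by
  have hfun : ρ = fun t => (2⁻¹ : ℂ) • (1 : Matrix (Fin 2) (Fin 2) ℂ)
      + ((cx * Real.exp (Real.exp (-2 * t) - 1) : ℝ) : ℂ) • σx
      + ((cy * Real.exp (Real.exp (-2 * t) - 1) : ℝ) : ℂ) • σy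
      + ((cz * Real.exp (2 * (Real.exp (-2 * t) - 1)) : ℝ) : ℂ) • σz := funext hρ
  refine ⟨by rw [hρ 0]; norm_num, ?_, ?_⟩
  · intro t _
    rw [hρ t, gksl_eval]
    have h1 : HasDerivAt (fun s : ℝ => Real.exp (-2 * s) - 1) (Real.exp (-2*t) * (-2)) t := by
      have := ((hasDerivAt_id t).const_mul (-2 : ℝ)).exp
      simpa using this.sub_const 1
    have hx := ((h1.exp.const_mul cx).ofReal_comp).smul_const σx
    have hy := ((h1.exp.const_mul cy).ofReal_comp).smul_const σy
    have hz := (((h1.const_mul (2:ℝ)).exp.const_mul cz).ofReal_comp).smul_const σz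
    have hD := ((((hasDerivAt_const t
        ((2⁻¹ : ℂ) • (1 : Matrix (Fin 2) (Fin 2) ℂ))).add hx).add hy).add hz)
    rw [hfun]
    convert hD using 1
    case e'_4 => rfl
    case e'_5 => rfl
    case e'_6 => rfl
    case e'_8 => rfl
    have he : Real.exp (-t) * Real.exp (-t) = Real.exp (-2*t) := by
      rw [← Real.exp_add]; ring_nf
    rw [he]
    match_scalars <;> push_cast <;> ring
  · rw [hfun]
    have h0 : Tendsto (fun t : ℝ => Real.exp (-2 * t)) atTop (nhds 0) := by
      have : Tendsto (fun t : ℝ => -2 * t) atTop atBot := by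
        apply Filter.Tendsto.const_mul_atTop_of_neg (by norm_num) tendsto_id
      exact Real.tendsto_exp_atBot.comp this
    have h1 : Tendsto (fun t : ℝ => Real.exp (Real.exp (-2 * t) - 1)) atTop
        (nhds (Real.exp (-1))) := by
      have := (Real.continuous_exp.tendsto _).comp (h0.sub_const 1)
      simpa [Function.comp_def] using this
    have h2 : Tendsto (fun t : ℝ => Real.exp (2 * (Real.exp (-2 * t) - 1))) atTop
        (nhds (Real.exp (-2))) := by
      have := (Real.continuous_exp.tendsto _).comp ((h0.sub_const 1).const_mul 2)
      norm_num at this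
      simpa [Function.comp_def] using this
    have tx : Tendsto (fun t : ℝ => ((cx * Real.exp (Real.exp (-2 * t) - 1) : ℝ) : ℂ) • σx)
        atTop (nhds (((Real.exp (-1) * cx : ℝ) : ℂ) • σx)) := by
      have : Tendsto (fun t : ℝ => ((cx * Real.exp (Real.exp (-2 * t) - 1) : ℝ) : ℂ)) atTop
          (nhds ((Real.exp (-1) * cx : ℝ) : ℂ)) := by
        rw [mul_comm (Real.exp (-1)) cx]
        exact (Complex.continuous_ofReal.tendsto _).comp (h1.const_mul cx)
      exact this.smul_const σx
    have ty : Tendsto (fun t : ℝ => ((cy * Real.exp (Real.exp (-2 * t) - 1) : ℝ) : ℂ) • σy)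
        atTop (nhds (((Real.exp (-1) * cy : ℝ) : ℂ) • σy)) := by
      have : Tendsto (fun t : ℝ => ((cy * Real.exp (Real.exp (-2 * t) - 1) : ℝ) : ℂ)) atTop
          (nhds ((Real.exp (-1) * cy : ℝ) : ℂ)) := by
        rw [mul_comm (Real.exp (-1)) cy]
        exact (Complex.continuous_ofReal.tendsto _).comp (h1.const_mul cy)
      exact this.smul_const σy
    have tz : Tendsto (fun t : ℝ => ((cz * Real.exp (2 * (Real.exp (-2 * t) - 1)) : ℝ) : ℂ) • σz)
        atTop (nhds (((Real.exp (-2) * cz : ℝ) : ℂ) • σz)) := by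
      have : Tendsto (fun t : ℝ => ((cz * Real.exp (2 * (Real.exp (-2 * t) - 1)) : ℝ) : ℂ)) atTop
          (nhds ((Real.exp (-2) * cz : ℝ) : ℂ)) := by
        rw [mul_comm (Real.exp (-2)) cz]
        exact (Complex.continuous_ofReal.tendsto _).comp (h2.const_mul cz)
      exact this.smul_const σz
    exact ((tendsto_const_nhds.add tx).add ty).add tz
end
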